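/- arXiv:math/0404421 — 8 statements merged into one kernel-verified Lean document; each statement's English description precedes it below -/
import Mathlib

section
/- Assume the continuum hypothesis. Then there exist uncountable disjoint sets X, Y ⊆ 2^ω (the Cantor space of subsets of ℕ) such that: (1) X is Borel concentrated on Y, i.e., for every Borel set B ⊆ 2^ω, if Y ⊆ B then X \ B is countable; (2) Y² \ Δ is relatively F_σ in X² ∪ Y², i.e., there is an F_σ subset F of 2^ω × 2^ω with F ∩ (X² ∪ Y²) = Y² \ Δ; and (3) X² \ Δ is relatively F_σ in X² ∪ Y², i.e., there is an F_σ subset H of 2^ω × 2^ω with H ∩ (X² ∪ Y²) = X² \ Δ. Here Δ = {(x,x) : x ∈ 2^ω} is the diagonal. -/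
open MeasureTheory

/-- A set is `F_σ` if it is a countable union of closed sets. -/
def IsFsigma {Z : Type*} [TopologicalSpace Z] (S : Set Z) : Prop :=
  ∃ C : ℕ → Set Z, (∀ n, IsClosed (C n)) ∧ S = ⋃ n, C n

/-!
View points of `2^ω` as subsets of `ℕ`. Under CH, enumerate the Borel sets as `(B_α)_{α<ω₁}` and
build, by recursion on `α`, infinite sets `y_α` and `x_α` such that any two distinct sets of the
construction have finite intersection, of even size for two `y`'s and of odd size for two `x`'s.
Pairs of distinct sets with finite intersection of a fixed parity form an `F_σ` subset of
`2^ω × 2^ω`, and the two parities cut `Y² \ Δ` and `X² \ Δ` out of `X² ∪ Y²`.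

`y_α` is chosen outside `B_α` whenever some candidate for stage `α` is. If `Y ⊆ B_α`, then no
candidate for stage `α` avoids `B_α`; every later `x_β` is such a candidate, so
`X \ B_α ⊆ {x_β | β ≤ α}` is countable.

A single stage diagonalizes against the countably many earlier sets `q₀, q₁, …`: step `k` adds an
element of `q_k` outside `q₀, …, q_{k-1}` when the parity of the overlap with `q_k` is wrong, and an
element of the `k`-th column of `ℕ ≅ ℕ × ℕ` outside `q₀, …, q_k`, which makes the new set
infinite. Every set of the construction meets each column finitely, so both choices are always
possible.
-/

theorem Set.Infinite.nonempty_sdiff {α : Type*} {s t : Set α} (hs : s.Infinite)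
    (ht : (s ∩ t).Finite) : (s \ t).Nonempty := by
  simpa [Set.sdiff_self_inter] using (hs.sdiff ht).nonempty

namespace BorelConcentrated

open Set

noncomputable section

theorem isFsigma_iUnion {Z ι : Type*} [TopologicalSpace Z] [Countable ι] {C : ι → Set Z}
    (hC : ∀ i, IsClosed (C i)) : IsFsigma (⋃ i, C i) := by
  rcases isEmpty_or_nonempty ι with hι | hι
  · exact ⟨fun _ => ∅, fun _ => isClosed_empty, by simp⟩
  · obtain ⟨f, hf⟩ := exists_surjective_nat ι
    exact ⟨C ∘ f, fun n => hC (f n), (hf.iUnion_comp C).symm⟩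

theorem rel_of_ne_of_forall_lt {W α : Type*} [LinearOrder W] {f : W → α} {r : α → α → Prop}
    (hr : ∀ a b, r a b → r b a) (h : ∀ v u, v < u → r (f u) (f v)) {v u : W} (hvu : v ≠ u) :
    r (f v) (f u) := by
  rcases hvu.lt_or_gt with hlt | hlt
  exacts [hr _ _ (h v u hlt), h u v hlt]

def overlap (a b : ℕ → Bool) : Set ℕ := {n | a n = true ∧ b n = true}

theorem overlap_comm (a b : ℕ → Bool) : overlap a b = overlap b a :=
  Set.ext fun _ => and_comm

def HasOverlapParity (a b : ℕ → Bool) (e : Bool) : Prop :=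
  (overlap a b).Finite ∧ (overlap a b).ncard.bodd = e

theorem HasOverlapParity.symm {a b : ℕ → Bool} {e : Bool} (h : HasOverlapParity a b e) :
    HasOverlapParity b a e := by
  rwa [HasOverlapParity, overlap_comm]

def parityClass (e : Bool) : Set ((ℕ → Bool) × (ℕ → Bool)) :=
  {p | p.1 ≠ p.2 ∧ HasOverlapParity p.1 p.2 e}

theorem isClosed_setOf_coord (m : ℕ) (P : Bool → Bool → Prop) :
    IsClosed {p : (ℕ → Bool) × (ℕ → Bool) | P (p.1 m) (p.2 m)} :=
  IsClosed.preimage (f := fun p : (ℕ → Bool) × (ℕ → Bool) => (p.1 m, p.2 m)) (by fun_prop)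
    (isClosed_discrete {c : Bool × Bool | P c.1 c.2})

theorem isClosed_setOf_overlap_eq (s : Finset ℕ) :
    IsClosed {p : (ℕ → Bool) × (ℕ → Bool) | overlap p.1 p.2 = s} := by
  have : {p : (ℕ → Bool) × (ℕ → Bool) | overlap p.1 p.2 = s} =
      ⋂ m, {p | (p.1 m = true ∧ p.2 m = true) ↔ m ∈ s} := by
    ext p
    simp [Set.ext_iff, overlap]
  rw [this]
  exact isClosed_iInter fun m => isClosed_setOf_coord m fun a b => (a = true ∧ b = true) ↔ m ∈ s

theorem parityClass_eq_iUnion (e : Bool) :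
    parityClass e = ⋃ i : {i : Finset ℕ × ℕ // i.1.card.bodd = e},
      {p | overlap p.1 p.2 = i.1.1} ∩ {p | p.1 i.1.2 ≠ p.2 i.1.2} := by
  ext p
  simp only [parityClass, HasOverlapParity, mem_ofPred_eq, mem_iUnion, mem_inter_iff,
    Subtype.exists, Prod.exists, Function.ne_iff]
  constructor
  · rintro ⟨⟨k, hk⟩, hfin, hpar⟩
    obtain ⟨s, hs⟩ := hfin.exists_finset_coe
    exact ⟨s, k, by rwa [← hs, ncard_coe_finset] at hpar, hs.symm, hk⟩
  · rintro ⟨s, k, hpar, hs, hk⟩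
    exact ⟨⟨k, hk⟩, hs ▸ s.finite_toSet, by rwa [hs, ncard_coe_finset]⟩

theorem isFsigma_parityClass (e : Bool) : IsFsigma (parityClass e) := by
  rw [parityClass_eq_iUnion]
  exact isFsigma_iUnion fun i =>
    (isClosed_setOf_overlap_eq i.1.1).inter (isClosed_setOf_coord i.1.2 (· ≠ ·))

theorem parityClass_inter_eq {X Y : Set (ℕ → Bool)} {e : Bool}
    (hX : X.Pairwise fun a b => HasOverlapParity a b e)
    (hY : Y.Pairwise fun a b => HasOverlapParity a b !e) :
    parityClass e ∩ (X ×ˢ X ∪ Y ×ˢ Y) = X ×ˢ X \ diagonal (ℕ → Bool) := by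
  ext ⟨a, b⟩
  simp only [parityClass, mem_inter_iff, mem_union, mem_prod, mem_sdiff, mem_ofPred_eq,
    mem_diagonal_iff]
  constructor
  · rintro ⟨⟨hne, hpar⟩, hab | ⟨ha, hb⟩⟩
    · exact ⟨hab, hne⟩
    · have := (hY ha hb hne).2
      rw [hpar.2] at this
      cases e <;> simp at this
  · rintro ⟨⟨ha, hb⟩, hne⟩
    exact ⟨⟨hne, hX ha hb hne⟩, Or.inl ⟨ha, hb⟩⟩

def column (n : ℕ) : Set ℕ := {m | m.unpair.1 = n}

theorem column_infinite (n : ℕ) : (column n).Infinite :=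
  infinite_of_injective_forall_mem (f := Nat.pair n)
    (fun i j h => by simpa using congrArg (fun m => m.unpair.2) h) (fun i => by simp [column])

def Admissible (a : ℕ → Bool) : Prop :=
  {m | a m = true}.Infinite ∧ ∀ n, ({m | a m = true} ∩ column n).Finite

theorem admissible_row_zero : Admissible fun m => decide (m.unpair.2 = 0) := by
  refine ⟨infinite_of_injective_forall_mem (f := fun n => Nat.pair n 0)
    (fun i j h => by simpa using congrArg (fun m => m.unpair.1) h) (fun n => by simp), fun n => ?_⟩
  refine (finite_singleton (Nat.pair n 0)).subset ?_
  rintro m ⟨hm, hn⟩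
  simp only [decide_eq_true_eq, mem_ofPred_eq, column] at hm hn
  rw [mem_singleton_iff, ← hm, ← hn, Nat.pair_unpair]

theorem ne_of_overlap_finite {a b : ℕ → Bool} (ha : Admissible a) (h : (overlap a b).Finite) :
    a ≠ b := by
  rintro rfl
  exact ha.1 (by simpa [overlap] using h)

section Diagonalization

variable (q : ℕ → (ℕ → Bool) × Bool)

-- Later steps avoid `q_j` and column `j` for `j < k`, so they change neither the overlap with
-- `q_j` nor the part of the new set in column `j`.
def blocked (k : ℕ) (E : Finset ℕ) : Set ℕ :=
  {m | (∃ j < k, (q j).1 m = true) ∨ m.unpair.1 < k} ∪ E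

-- A repeated `q_k` was already dealt with at its first occurrence (and `q_k \ q_j` may be empty).
open Classical in
def fixPoints (k : ℕ) (E : Finset ℕ) : Finset ℕ :=
  if (∀ j < k, q j ≠ q k) ∧ (E.filter fun m => (q k).1 m = true).card.bodd ≠ (q k).2 then
    {sInf ({m | (q k).1 m = true} \ blocked q k E)}
  else ∅

def columnPoint (k : ℕ) (E : Finset ℕ) : ℕ :=
  sInf (column k \ (blocked q k E ∪ {m | (q k).1 m = true}))

def newPoints (k : ℕ) (E : Finset ℕ) : Finset ℕ :=
  insert (columnPoint q k E) (fixPoints q k E)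

def approx : ℕ → Finset ℕ
  | 0 => ∅
  | k + 1 => approx k ∪ newPoints q k (approx k)

open Classical in
def limit (m : ℕ) : Bool :=
  decide (∃ k, m ∈ approx q k)

theorem mem_approx_iff {m k : ℕ} : m ∈ approx q k ↔ ∃ i < k, m ∈ newPoints q i (approx q i) := by
  induction k with
  | zero => simp [approx]
  | succ k ih =>
    simp only [approx, Finset.mem_union, ih, Nat.lt_succ_iff_lt_or_eq, or_and_right, exists_or,
      exists_eq_left]

theorem limit_eq_true_iff {m : ℕ} : limit q m = true ↔ ∃ i, m ∈ newPoints q i (approx q i) := by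
  simp only [limit, decide_eq_true_eq, mem_approx_iff]
  exact ⟨fun ⟨_, i, _, h⟩ => ⟨i, h⟩, fun ⟨i, h⟩ => ⟨i + 1, i, i.lt_add_one, h⟩⟩

variable {q} (hq : ∀ k, Admissible (q k).1)
include hq

theorem columnPoint_mem (k : ℕ) (E : Finset ℕ) :
    columnPoint q k E ∈ column k \ (blocked q k E ∪ {m | (q k).1 m = true}) := by
  refine Nat.sInf_mem ((column_infinite k).nonempty_sdiff ?_)
  refine (((finite_Iic k).biUnion fun j _ => (hq j).2 k).union E.finite_toSet).subset ?_
  rintro m ⟨hm, ((⟨j, hj, hjm⟩ | hlt) | hE) | hkm⟩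
  · exact Or.inl (mem_biUnion (mem_Iic.2 hj.le) ⟨hjm, hm⟩)
  · exact absurd hm (by simp only [column, mem_ofPred_eq]; omega)
  · exact Or.inr hE
  · exact Or.inl (mem_biUnion (mem_Iic.2 le_rfl) ⟨hkm, hm⟩)

variable (hAD : ∀ j k, q j ≠ q k → (overlap (q j).1 (q k).1).Finite)
include hAD

theorem sInf_mem_fixPoints {k : ℕ} (E : Finset ℕ) (hk : ∀ j < k, q j ≠ q k) :
    sInf ({m | (q k).1 m = true} \ blocked q k E) ∈ {m | (q k).1 m = true} \ blocked q k E := by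
  refine Nat.sInf_mem ((hq k).1.nonempty_sdiff ?_)
  refine ((((finite_Iio k).biUnion fun j hj => hAD k j (hk j hj).symm).union
    ((finite_Iio k).biUnion fun n _ => (hq k).2 n)).union E.finite_toSet).subset ?_
  rintro m ⟨hkm, (⟨j, hj, hjm⟩ | hlt) | hE⟩
  · exact Or.inl (Or.inl (mem_biUnion hj ⟨hkm, hjm⟩))
  · exact Or.inl (Or.inr (mem_biUnion hlt ⟨hkm, rfl⟩))
  · exact Or.inr hE

theorem fixPoints_subset (k : ℕ) (E : Finset ℕ) :
    ↑(fixPoints q k E) ⊆ {m | (q k).1 m = true} \ blocked q k E := by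
  unfold fixPoints
  split_ifs with h
  · simpa using sInf_mem_fixPoints hq hAD E h.1
  · simp

theorem notMem_blocked_of_mem_newPoints {k : ℕ} {E : Finset ℕ} {m : ℕ}
    (hm : m ∈ newPoints q k E) : m ∉ blocked q k E := by
  rcases Finset.mem_insert.1 hm with rfl | hm
  · exact fun h => (columnPoint_mem hq k E).2 (Or.inl h)
  · exact (fixPoints_subset hq hAD k E hm).2

theorem filter_newPoints (k : ℕ) (E : Finset ℕ) :
    (newPoints q k E).filter (fun m => (q k).1 m = true) = fixPoints q k E := by
  rw [newPoints, Finset.filter_insert,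
    if_neg fun h : (q k).1 (columnPoint q k E) = true => (columnPoint_mem hq k E).2 (Or.inr h)]
  exact Finset.filter_true_of_mem fun m hm => (fixPoints_subset hq hAD k E hm).1

theorem card_filter_approx_succ (k : ℕ) :
    ((approx q (k + 1)).filter fun m => (q k).1 m = true).card =
      ((approx q k).filter fun m => (q k).1 m = true).card + (fixPoints q k (approx q k)).card := by
  rw [approx, Finset.filter_union, filter_newPoints hq hAD, Finset.card_union_of_disjoint]
  exact Finset.disjoint_left.2 fun m hE hm =>
    (fixPoints_subset hq hAD k _ hm).2 (Or.inr (Finset.mem_filter.1 hE).1)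

theorem overlap_limit (j : ℕ) :
    overlap (limit q) (q j).1 = ↑((approx q (j + 1)).filter fun m => (q j).1 m = true) := by
  ext m
  simp only [overlap, mem_ofPred_eq, Finset.coe_filter, limit_eq_true_iff, mem_approx_iff]
  refine ⟨fun ⟨⟨i, hi⟩, hjm⟩ => ⟨⟨i, ?_, hi⟩, hjm⟩, fun ⟨⟨i, _, hi⟩, hjm⟩ => ⟨⟨i, hi⟩, hjm⟩⟩
  by_contra hij
  exact notMem_blocked_of_mem_newPoints hq hAD hi (Or.inl (Or.inl ⟨j, by omega, hjm⟩))

theorem limit_inter_column_subset (n : ℕ) :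
    {m | limit q m = true} ∩ column n ⊆ approx q (n + 1) := by
  rintro m ⟨hm, rfl⟩
  obtain ⟨i, hi⟩ := (limit_eq_true_iff q).1 hm
  refine (mem_approx_iff q).2 ⟨i, ?_, hi⟩
  by_contra hin
  exact notMem_blocked_of_mem_newPoints hq hAD hi (Or.inl (Or.inr (by omega)))

theorem admissible_limit : Admissible (limit q) := by
  refine ⟨infinite_of_injective_forall_mem (f := fun k => columnPoint q k (approx q k))
    (fun k l h => ?_) (fun k => ?_), fun n => (approx q (n + 1)).finite_toSet.subset
      (limit_inter_column_subset hq hAD n)⟩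
  · have hk := (columnPoint_mem hq k (approx q k)).1
    have hl := (columnPoint_mem hq l (approx q l)).1
    simp only [column, mem_ofPred_eq] at hk hl
    rw [← hk, ← hl]
    exact congrArg (fun m => m.unpair.1) h
  · exact (limit_eq_true_iff q).2 ⟨k, Finset.mem_insert_self _ _⟩

theorem hasOverlapParity_limit (k : ℕ) : HasOverlapParity (limit q) (q k).1 (q k).2 := by
  induction k using Nat.strong_induction_on with
  | _ k ih =>
  by_cases hdup : ∃ j < k, q j = q k
  · obtain ⟨j, hj, hqj⟩ := hdup
    exact hqj ▸ ih j hj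
  push Not at hdup
  rw [HasOverlapParity, overlap_limit hq hAD, ncard_coe_finset, card_filter_approx_succ hq hAD]
  refine ⟨Finset.finite_toSet _, ?_⟩
  unfold fixPoints
  split_ifs with hfix
  · rw [Finset.card_singleton, Nat.bodd_succ]
    cases h : (q k).2 <;> simp_all
  · push Not at hfix
    exact hfix hdup

theorem exists_admissible_forall_hasOverlapParity :
    ∃ z, Admissible z ∧ ∀ k, HasOverlapParity z (q k).1 (q k).2 :=
  ⟨limit q, admissible_limit hq hAD, hasOverlapParity_limit hq hAD⟩

end Diagonalization

def IsCandidate (S : Set ((ℕ → Bool) × Bool)) (z : ℕ → Bool) : Prop :=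
  Admissible z ∧ ∀ p ∈ S, HasOverlapParity z p.1 p.2

def IsADFamily (S : Set ((ℕ → Bool) × Bool)) : Prop :=
  (∀ p ∈ S, Admissible p.1) ∧ S.Pairwise fun p r => (overlap p.1 r.1).Finite

theorem IsCandidate.mono {S T : Set ((ℕ → Bool) × Bool)} {z : ℕ → Bool} (hST : S ⊆ T)
    (hz : IsCandidate T z) : IsCandidate S z :=
  ⟨hz.1, fun p hp => hz.2 p (hST hp)⟩

theorem IsADFamily.exists_isCandidate {S : Set ((ℕ → Bool) × Bool)} (hS : IsADFamily S)
    (hc : S.Countable) : ∃ z, IsCandidate S z := by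
  rcases S.eq_empty_or_nonempty with rfl | hne
  · obtain ⟨z, hz, -⟩ := exists_admissible_forall_hasOverlapParity
      (q := fun _ => (fun m => decide (m.unpair.2 = 0), false))
      (fun _ => admissible_row_zero) (fun _ _ h => absurd rfl h)
    exact ⟨z, hz, by simp⟩
  · obtain ⟨q, rfl⟩ := hc.exists_eq_range hne
    obtain ⟨z, hz, hpar⟩ := exists_admissible_forall_hasOverlapParity
      (fun k => hS.1 _ ⟨k, rfl⟩) (fun j k h => hS.2 ⟨j, rfl⟩ ⟨k, rfl⟩ h)
    exact ⟨z, hz, forall_mem_range.2 hpar⟩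

theorem IsADFamily.insert {S : Set ((ℕ → Bool) × Bool)} {z : ℕ → Bool} (hS : IsADFamily S)
    (hz : IsCandidate S z) (e : Bool) : IsADFamily (insert (z, e) S) := by
  refine ⟨?_, pairwise_insert.2 ⟨hS.2, fun p hp _ => ⟨(hz.2 p hp).1, ?_⟩⟩⟩
  · rintro p (rfl | hp)
    exacts [hz.1, hS.1 p hp]
  · rw [overlap_comm]
    exact (hz.2 p hp).1

theorem isADFamily_iUnion {ι : Sort*} {S : ι → Set ((ℕ → Bool) × Bool)}
    (hdir : Directed (· ⊆ ·) S) (hS : ∀ i, IsADFamily (S i)) : IsADFamily (⋃ i, S i) :=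
  ⟨fun p hp => by
    obtain ⟨i, hi⟩ := mem_iUnion.1 hp
    exact (hS i).1 p hi, (pairwise_iUnion hdir).2 fun i => (hS i).2⟩

def IsCandidateAvoiding (S : Set ((ℕ → Bool) × Bool)) (U : Set (ℕ → Bool)) (z : ℕ → Bool) :
    Prop :=
  IsCandidate S z ∧ ((∃ z', IsCandidate S z' ∧ z' ∉ U) → z ∉ U)

theorem exists_isCandidateAvoiding {S : Set ((ℕ → Bool) × Bool)} (U : Set (ℕ → Bool))
    (h : ∃ z, IsCandidate S z) : ∃ z, IsCandidateAvoiding S U z := by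
  by_cases hU : ∃ z, IsCandidate S z ∧ z ∉ U
  · obtain ⟨z, hz, hzU⟩ := hU
    exact ⟨z, hz, fun _ => hzU⟩
  · obtain ⟨z, hz⟩ := h
    exact ⟨z, hz, fun h' => absurd h' hU⟩

section Transfinite

variable {W : Type*} [LinearOrder W] [WellFoundedLT W] (B : W → Set (ℕ → Bool))

def nextPair (S : Set ((ℕ → Bool) × Bool)) (U : Set (ℕ → Bool)) : (ℕ → Bool) × (ℕ → Bool) :=
  let y := Classical.epsilon (IsCandidateAvoiding S U)
  (y, Classical.epsilon (IsCandidate (insert (y, false) S)))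

def points : W → (ℕ → Bool) × (ℕ → Bool) :=
  wellFounded_lt.fix fun w rec =>
    nextPair (⋃ v, ⋃ h : v < w, {((rec v h).1, false), ((rec v h).2, true)}) (B w)

def yPt (w : W) : ℕ → Bool := (points B w).1

def xPt (w : W) : ℕ → Bool := (points B w).2

-- Tags are parities (`Nat.bodd`): later sets must meet each `y_v` evenly and each `x_v` oddly.
def past (w : W) : Set ((ℕ → Bool) × Bool) :=
  ⋃ v < w, {(yPt B v, false), (xPt B v, true)}

theorem points_eq (w : W) : points B w = nextPair (past B w) (B w) :=
  wellFounded_lt.fix_eq _ w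

theorem mem_past {v w : W} (h : v < w) :
    (yPt B v, false) ∈ past B w ∧ (xPt B v, true) ∈ past B w :=
  ⟨mem_biUnion h (Or.inl rfl), mem_biUnion h (Or.inr rfl)⟩

theorem isCandidateAvoiding_yPt_of_exists {w : W} (h : ∃ z, IsCandidate (past B w) z) :
    IsCandidateAvoiding (past B w) (B w) (yPt B w) := by
  rw [yPt, points_eq]
  exact Classical.epsilon_spec (exists_isCandidateAvoiding _ h)

theorem isCandidate_xPt_of_exists {w : W} (h : ∃ z, IsCandidate (insert (yPt B w, false) (past B w)) z) :
    IsCandidate (insert (yPt B w, false) (past B w)) (xPt B w) := by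
  rw [xPt, points_eq]
  rw [yPt, points_eq] at h ⊢
  exact Classical.epsilon_spec h

def upTo (w : W) : Set ((ℕ → Bool) × Bool) :=
  insert (xPt B w, true) (insert (yPt B w, false) (past B w))

theorem past_mono {v w : W} (h : v ≤ w) : past B v ⊆ past B w :=
  biUnion_mono (fun _ hu => lt_of_lt_of_le hu h) fun _ _ => subset_rfl

theorem upTo_subset_past {v w : W} (h : v < w) : upTo B v ⊆ past B w := by
  rintro p (rfl | rfl | hp)
  exacts [(mem_past B h).2, (mem_past B h).1, past_mono B h.le hp]

theorem monotone_upTo : Monotone (upTo B) := by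
  intro v w h
  rcases h.lt_or_eq with h | rfl
  · exact (upTo_subset_past B h).trans ((subset_insert _ _).trans (subset_insert _ _))
  · exact subset_rfl

theorem past_eq_iUnion_upTo (w : W) : past B w = ⋃ v : Iio w, upTo B v := by
  refine Subset.antisymm ?_ (iUnion_subset fun v => upTo_subset_past B v.2)
  refine iUnion₂_subset fun v hv => ?_
  rintro p (rfl | rfl) <;> refine mem_iUnion.2 ⟨⟨v, hv⟩, ?_⟩
  exacts [mem_insert_of_mem _ (mem_insert _ _), mem_insert _ _]

variable (hW : ∀ w : W, (Iio w).Countable)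
include hW

theorem past_countable (w : W) : (past B w).Countable :=
  (hW w).biUnion fun _ _ => (toFinite _).countable

theorem isADFamily_past (w : W) : IsADFamily (past B w) := by
  induction w using WellFoundedLT.induction with
  | ind w ih =>
  rw [past_eq_iUnion_upTo]
  refine isADFamily_iUnion ((monotone_upTo B).comp (Subtype.mono_coe _)).directed_le fun ⟨v, hv⟩ => ?_
  have hy := (isCandidateAvoiding_yPt_of_exists B ((ih v hv).exists_isCandidate (past_countable B hW v))).1
  have hS := (ih v hv).insert hy false
  exact hS.insert (isCandidate_xPt_of_exists B (hS.exists_isCandidate ((past_countable B hW v).insert _)))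
    true

theorem isCandidateAvoiding_yPt (w : W) : IsCandidateAvoiding (past B w) (B w) (yPt B w) :=
  isCandidateAvoiding_yPt_of_exists B ((isADFamily_past B hW w).exists_isCandidate
    (past_countable B hW w))

theorem isCandidate_xPt (w : W) : IsCandidate (insert (yPt B w, false) (past B w)) (xPt B w) :=
  isCandidate_xPt_of_exists B (((isADFamily_past B hW w).insert
    (isCandidateAvoiding_yPt B hW w).1 false).exists_isCandidate ((past_countable B hW w).insert _))

theorem hasOverlapParity_yPt {v w : W} (h : v ≠ w) :
    HasOverlapParity (yPt B v) (yPt B w) false :=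
  rel_of_ne_of_forall_lt (f := yPt B) (r := fun a b => HasOverlapParity a b false)
    (fun _ _ h => HasOverlapParity.symm h)
    (fun _ u h => (isCandidateAvoiding_yPt B hW u).1.2 _ (mem_past B h).1) h

theorem hasOverlapParity_xPt {v w : W} (h : v ≠ w) :
    HasOverlapParity (xPt B v) (xPt B w) true :=
  rel_of_ne_of_forall_lt (f := xPt B) (r := fun a b => HasOverlapParity a b true)
    (fun _ _ h => HasOverlapParity.symm h)
    (fun _ u h => (isCandidate_xPt B hW u).2 _ (mem_insert_of_mem _ (mem_past B h).2)) h

theorem overlap_xPt_yPt_finite (v w : W) : (overlap (xPt B v) (yPt B w)).Finite := by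
  rcases lt_trichotomy v w with h | rfl | h
  · rw [overlap_comm]
    exact ((isCandidateAvoiding_yPt B hW w).1.2 _ (mem_past B h).2).1
  · exact ((isCandidate_xPt B hW v).2 _ (mem_insert _ _)).1
  · exact ((isCandidate_xPt B hW v).2 _ (mem_insert_of_mem _ (mem_past B h).1)).1

theorem yPt_injective : Function.Injective (yPt B) := fun v w h => by
  by_contra hvw
  exact ne_of_overlap_finite (isCandidateAvoiding_yPt B hW v).1.1
    (hasOverlapParity_yPt B hW hvw).1 h

theorem xPt_injective : Function.Injective (xPt B) := fun v w h => by
  by_contra hvw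
  exact ne_of_overlap_finite (isCandidate_xPt B hW v).1 (hasOverlapParity_xPt B hW hvw).1 h

theorem pairwise_hasOverlapParity_yPt :
    (range (yPt B)).Pairwise fun a b => HasOverlapParity a b false := by
  rintro _ ⟨v, rfl⟩ _ ⟨w, rfl⟩ h
  exact hasOverlapParity_yPt B hW (ne_of_apply_ne _ h)

theorem pairwise_hasOverlapParity_xPt :
    (range (xPt B)).Pairwise fun a b => HasOverlapParity a b true := by
  rintro _ ⟨v, rfl⟩ _ ⟨w, rfl⟩ h
  exact hasOverlapParity_xPt B hW (ne_of_apply_ne _ h)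

theorem disjoint_range_xPt_yPt : Disjoint (range (xPt B)) (range (yPt B)) := by
  rw [disjoint_left]
  rintro _ ⟨v, rfl⟩ ⟨w, h⟩
  exact ne_of_overlap_finite (isCandidate_xPt B hW v).1 (overlap_xPt_yPt_finite B hW v w) h.symm

theorem countable_range_xPt_diff (w : W) (hY : range (yPt B) ⊆ B w) :
    (range (xPt B) \ B w).Countable := by
  have hB : ∀ z, IsCandidate (past B w) z → z ∈ B w := fun z hz => by_contra fun hzB =>
    (isCandidateAvoiding_yPt B hW w).2 ⟨z, hz, hzB⟩ (hY ⟨w, rfl⟩)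
  refine (((hW w).union (countable_singleton w)).image (xPt B)).mono ?_
  rintro _ ⟨⟨v, rfl⟩, hv⟩
  rcases lt_or_ge w v with hwv | hvw
  · exact absurd (hB _ ((isCandidate_xPt B hW v).mono
      ((past_mono B hwv.le).trans (subset_insert _ _)))) hv
  · exact ⟨v, hvw.lt_or_eq, rfl⟩

end Transfinite

abbrev Omega1 : Type := (Cardinal.aleph.{0} 1).ord.ToType

theorem countable_Iio_omega1 (w : Omega1) : (Iio w).Countable :=
  Cardinal.le_aleph0_iff_set_countable.1
    (Cardinal.lt_aleph_one_iff.1 (by simpa using Cardinal.mk_Iio_lt w))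

theorem not_countable_range_of_injective {α : Type} {f : Omega1 → α} (hf : Function.Injective f) :
    ¬ (range f).Countable := by
  rw [← Cardinal.le_aleph0_iff_set_countable, Cardinal.mk_range_eq f hf, Cardinal.mk_ord_toType]
  exact Cardinal.aleph0_lt_aleph_one.not_ge

theorem exists_borel_subset_range (hCH : Cardinal.continuum.{0} = Cardinal.aleph 1) :
    ∃ B : Omega1 → Set (ℕ → Bool), ∀ s, MeasurableSet[borel (ℕ → Bool)] s → s ∈ range B := by
  obtain ⟨b, hbc, -, hb⟩ := TopologicalSpace.exists_countable_basis (ℕ → Bool)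
  have hcard : Cardinal.mk {s : Set (ℕ → Bool) | MeasurableSet[borel (ℕ → Bool)] s} ≤
      Cardinal.mk Omega1 := by
    rw [Cardinal.mk_ord_toType, ← hCH, hb.borel_eq_generateFrom]
    exact MeasurableSpace.cardinal_measurableSet_le_continuum
      (hbc.le_aleph0.trans Cardinal.aleph0_le_continuum)
  obtain ⟨e⟩ := hcard
  have : Nonempty {s : Set (ℕ → Bool) | MeasurableSet[borel (ℕ → Bool)] s} :=
    ⟨⟨∅, @MeasurableSet.empty _ (borel _)⟩⟩
  refine ⟨fun w => (Function.invFun e w).1, fun s hs => ?_⟩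
  obtain ⟨w, hw⟩ := Function.invFun_surjective e.injective ⟨s, hs⟩
  exact ⟨w, congrArg Subtype.val hw⟩

end

end BorelConcentrated

open BorelConcentrated in
/-- (CH) There are uncountable disjoint sets `X, Y ⊆ 2^ω` such that `X` is Borel
concentrated on `Y`, `Y² \ Δ` is relatively `F_σ` in `X² ∪ Y²`, and `X² \ Δ` is
relatively `F_σ` in `X² ∪ Y²`. -/
theorem stmt2 (hCH : Cardinal.continuum = Cardinal.aleph 1) :
    ∃ X Y : Set (ℕ → Bool),
      ¬ X.Countable ∧ ¬ Y.Countable ∧ Disjoint X Y ∧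
      (∀ B : Set (ℕ → Bool), MeasurableSet[borel (ℕ → Bool)] B → Y ⊆ B →
        (X \ B).Countable) ∧
      (∃ F : Set ((ℕ → Bool) × (ℕ → Bool)), IsFsigma F ∧
        F ∩ (X ×ˢ X ∪ Y ×ˢ Y) = (Y ×ˢ Y) \ Set.diagonal (ℕ → Bool)) ∧
      (∃ H : Set ((ℕ → Bool) × (ℕ → Bool)), IsFsigma H ∧
        H ∩ (X ×ˢ X ∪ Y ×ˢ Y) = (X ×ˢ X) \ Set.diagonal (ℕ → Bool)) := by
  obtain ⟨B, hB⟩ := exists_borel_subset_range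
    (Cardinal.lift_eq_aleph_one.1 (Cardinal.lift_continuum.trans hCH))
  have hW := countable_Iio_omega1
  refine ⟨_, _, not_countable_range_of_injective (xPt_injective B hW),
    not_countable_range_of_injective (yPt_injective B hW), disjoint_range_xPt_yPt B hW,
    fun s hs hYs => ?_, ⟨_, isFsigma_parityClass false, ?_⟩, ⟨_, isFsigma_parityClass true, ?_⟩⟩
  · obtain ⟨w, rfl⟩ := hB s hs
    exact countable_range_xPt_diff B hW w hYs
  · rw [Set.union_comm]
    exact parityClass_inter_eq (pairwise_hasOverlapParity_yPt B hW)
      (pairwise_hasOverlapParity_xPt B hW)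
  · exact parityClass_inter_eq (pairwise_hasOverlapParity_xPt B hW)
      (pairwise_hasOverlapParity_yPt B hW)
end

section
/- Assume that every family T of infinite subsets of ℕ that is linearly ordered by almost inclusion ⊆* and has cardinality strictly less than the continuum 𝔠 admits a pseudointersection, i.e., an infinite set z ⊆ ℕ with z ⊆* y for every y ∈ T (this is the hypothesis 𝔱 = 𝔠). Then there exist disjoint sets X, Y ⊆ 2^ω, each of cardinality 𝔠, such that: (1) X is Borel 𝔠-concentrated on Y, i.e., for every Borel set B ⊆ 2^ω, if Y ⊆ B then |X \ B| < 𝔠; (2) Y² \ Δ is relatively F_σ in X² ∪ Y², i.e., there is an F_σ subset F of 2^ω × 2^ω with F ∩ (X² ∪ Y²) = Y² \ Δ; and (3) X² \ Δ is relatively F_σ in X² ∪ Y², i.e., there is an F_σ subset H of 2^ω × 2^ω with H ∩ (X² ∪ Y²) = X² \ Δ. Here Δ = {(x,x) : x ∈ 2^ω} is the diagonal. -/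
/-!
Index by the initial ordinal of `𝔠`, whose initial segments have size `< 𝔠`, and list the Borel
sets as `(B i)`. By recursion build a `⊆*`-decreasing tower of infinite sets `y i`: `y i` is an
infinite pseudointersection of the odd parts of the earlier `y j` (it exists by `𝔱 = 𝔠`), chosen
outside `B i` whenever possible. Take `Y = {y i}` and `X = {even part of y i}`.

Distinct points of `Y` are `⊆*`-comparable with infinite intersection, while distinct points of `X`
are almost disjoint (a later `y i` lies almost inside the odd part of an earlier `y j`). Both
"distinct and almost comparable" and "distinct and almost disjoint" are `F_σ` relations on
`2^ω × 2^ω`, which gives the two relative `F_σ` statements. If `Y ⊆ B i`, then `y i ∈ B i`, so no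
infinite pseudointersection of the chain at stage `i` avoids `B i`; the even part of every later
`y j` is such a pseudointersection, so `X \ B i` consists of the `< 𝔠` points from stages `≤ i`.
-/

open MeasureTheory

open Set Filter Function

section Fsigma

variable {Z : Type*} [TopologicalSpace Z] {s t : Set Z}

theorem isFsigma_iff_isGδ_compl : IsFsigma s ↔ IsGδ sᶜ := by
  rw [isGδ_iff_eq_iInter_nat]
  constructor
  · rintro ⟨C, hC, rfl⟩
    exact ⟨fun n => (C n)ᶜ, fun n => (hC n).isOpen_compl, compl_iUnion C⟩
  · rintro ⟨U, hU, hs⟩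
    refine ⟨fun n => (U n)ᶜ, fun n => (hU n).isClosed_compl, ?_⟩
    rw [← compl_iInter, ← hs, compl_compl]

theorem IsClosed.isFsigma (hs : IsClosed s) : IsFsigma s :=
  ⟨fun _ => s, fun _ => hs, (iUnion_const s).symm⟩

theorem IsFsigma.iUnion {ι : Sort*} [Countable ι] {f : ι → Set Z} (hf : ∀ i, IsFsigma (f i)) :
    IsFsigma (⋃ i, f i) := by
  simp only [isFsigma_iff_isGδ_compl, compl_iUnion] at hf ⊢
  exact .iInter hf

theorem IsFsigma.union (hs : IsFsigma s) (ht : IsFsigma t) : IsFsigma (s ∪ t) := by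
  rw [isFsigma_iff_isGδ_compl, compl_union] at *
  exact hs.inter ht

end Fsigma

def offDiagEventually {α : Type*} (R : α → α → Prop) : Set ((ℕ → α) × (ℕ → α)) :=
  {pq | pq.1 ≠ pq.2 ∧ ∀ᶠ m in atTop, R (pq.1 m) (pq.2 m)}

theorem isFsigma_offDiagEventually {α : Type*} [TopologicalSpace α] [DiscreteTopology α]
    (R : α → α → Prop) : IsFsigma (offDiagEventually R) := by
  have hclosed : ∀ (P : α → α → Prop) (k l : ℕ),
      IsClosed {pq : (ℕ → α) × (ℕ → α) | P (pq.1 k) (pq.2 l)} := fun P k l =>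
    (isClosed_discrete {ab : α × α | P ab.1 ab.2}).preimage
      (f := fun pq : (ℕ → α) × (ℕ → α) => (pq.1 k, pq.2 l)) (by fun_prop)
  have hunion : offDiagEventually R = ⋃ k : ℕ, ⋃ n : ℕ,
      {pq | pq.1 k ≠ pq.2 k} ∩ ⋂ m ≥ n, {pq | R (pq.1 m) (pq.2 m)} := by
    ext pq
    simp [offDiagEventually, funext_iff, eventually_atTop]
  rw [hunion]
  exact .iUnion fun k => .iUnion fun n => IsClosed.isFsigma <|
    (hclosed (· ≠ ·) k k).inter (isClosed_biInter fun m _ => hclosed R m m)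

namespace Set

theorem boolIndicator_injective {α : Type*} : Injective (boolIndicator : Set α → α → Bool) :=
  fun s t h => ext fun x => by rw [mem_iff_boolIndicator, mem_iff_boolIndicator, h]

theorem finite_iff_eventually_atTop_notMem {u : Set ℕ} : u.Finite ↔ ∀ᶠ m in atTop, m ∉ u := by
  simp only [← Nat.cofinite_eq_atTop, eventually_cofinite, not_not, ofPred_mem_eq]

variable {s t : Set ℕ}

theorem finite_diff_iff_eventually_boolIndicator_le :
    (s \ t).Finite ↔ ∀ᶠ m in atTop, s.boolIndicator m ≤ t.boolIndicator m := by
  refine finite_iff_eventually_atTop_notMem.trans (eventually_congr (.of_forall fun m => ?_))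
  rw [Set.mem_sdiff, mem_iff_boolIndicator, mem_iff_boolIndicator, Bool.le_iff_imp,
    not_and_not_right]

theorem finite_inter_iff_eventually_boolIndicator_and :
    (s ∩ t).Finite ↔ ∀ᶠ m in atTop, (s.boolIndicator m && t.boolIndicator m) = false := by
  refine finite_iff_eventually_atTop_notMem.trans (eventually_congr (.of_forall fun m => ?_))
  rw [mem_inter_iff, mem_iff_boolIndicator, mem_iff_boolIndicator]
  cases s.boolIndicator m <;> cases t.boolIndicator m <;> decide

theorem boolIndicator_mk_mem_offDiagEventually_le :
    (s.boolIndicator, t.boolIndicator) ∈ offDiagEventually (· ≤ ·) ↔ s ≠ t ∧ (s \ t).Finite := by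
  rw [finite_diff_iff_eventually_boolIndicator_le, boolIndicator_injective.ne_iff.symm]
  rfl

theorem boolIndicator_mk_mem_offDiagEventually_ge :
    (s.boolIndicator, t.boolIndicator) ∈ offDiagEventually (· ≥ ·) ↔ s ≠ t ∧ (t \ s).Finite := by
  rw [finite_diff_iff_eventually_boolIndicator_le, boolIndicator_injective.ne_iff.symm]
  rfl

theorem boolIndicator_mk_mem_offDiagEventually_and :
    (s.boolIndicator, t.boolIndicator) ∈ offDiagEventually (fun a b => (a && b) = false) ↔
      s ≠ t ∧ (s ∩ t).Finite := by
  rw [finite_inter_iff_eventually_boolIndicator_and, boolIndicator_injective.ne_iff.symm]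
  rfl

end Set

theorem inter_prod_self_union_prod_self_eq {α : Type*} {F : Set (α × α)} {X Y : Set α}
    (hX : ∀ p ∈ X, ∀ q ∈ X, (p, q) ∉ F) (hY : ∀ p ∈ Y, ∀ q ∈ Y, (p, q) ∈ F ↔ p ≠ q) :
    F ∩ (X ×ˢ X ∪ Y ×ˢ Y) = Y ×ˢ Y \ diagonal α := by
  ext ⟨p, q⟩
  simp only [mem_inter_iff, mem_union, mem_prod, Set.mem_sdiff, mem_diagonal_iff]
  constructor
  · rintro ⟨hF, ⟨hp, hq⟩ | ⟨hp, hq⟩⟩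
    · exact absurd hF (hX p hp q hq)
    · exact ⟨⟨hp, hq⟩, (hY p hp q hq).1 hF⟩
  · rintro ⟨⟨hp, hq⟩, hpq⟩
    exact ⟨(hY p hp q hq).2 hpq, .inr ⟨hp, hq⟩⟩

def evenPart (s : Set ℕ) : Set ℕ := range fun k => Nat.nth (· ∈ s) (2 * k)

def oddPart (s : Set ℕ) : Set ℕ := range fun k => Nat.nth (· ∈ s) (2 * k + 1)

section EvenOdd

variable {s : Set ℕ} (hs : s.Infinite)
include hs

theorem evenPart_subset : evenPart s ⊆ s := range_subset_iff.2 fun _ => Nat.nth_mem_of_infinite hs _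

theorem oddPart_subset : oddPart s ⊆ s := range_subset_iff.2 fun _ => Nat.nth_mem_of_infinite hs _

theorem evenPart_infinite : (evenPart s).Infinite :=
  infinite_range_of_injective <| (Nat.nth_injective hs).comp fun a b h => by omega

theorem oddPart_infinite : (oddPart s).Infinite :=
  infinite_range_of_injective <| (Nat.nth_injective hs).comp fun a b h => by omega

theorem disjoint_evenPart_oddPart : Disjoint (evenPart s) (oddPart s) := by
  rw [disjoint_iff_forall_ne]
  rintro _ ⟨k, rfl⟩ _ ⟨l, rfl⟩ h
  have := Nat.nth_injective hs h
  omega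

theorem not_diff_oddPart_finite {t : Set ℕ} (hst : evenPart s ⊆ t) : ¬(t \ oddPart s).Finite :=
  fun h => evenPart_infinite hs <| h.subset fun _ hx =>
    ⟨hst hx, (disjoint_evenPart_oddPart hs).notMem_of_mem_left hx⟩

end EvenOdd

structure IsOddTower {ι : Type*} [LinearOrder ι] (y : ι → Set ℕ) : Prop where
  infinite : ∀ i, (y i).Infinite
  diff_oddPart_finite : ∀ ⦃i j⦄, j < i → (y i \ oddPart (y j)).Finite

namespace IsOddTower

variable {ι : Type*} [LinearOrder ι] {y : ι → Set ℕ} (hy : IsOddTower y)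
include hy

theorem diff_finite {i j : ι} (hji : j < i) : (y i \ y j).Finite :=
  (hy.diff_oddPart_finite hji).subset (sdiff_subset_sdiff_right (oddPart_subset (hy.infinite j)))

theorem diff_finite_or_diff_finite (i j : ι) : (y i \ y j).Finite ∨ (y j \ y i).Finite := by
  rcases lt_trichotomy i j with hij | rfl | hji
  · exact .inr (hy.diff_finite hij)
  · simp
  · exact .inl (hy.diff_finite hji)

theorem inter_infinite (i j : ι) : (y i ∩ y j).Infinite := by
  wlog hji : j ≤ i generalizing i j
  · rw [inter_comm]
    exact this j i (le_of_not_ge hji)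
  rcases hji.lt_or_eq with hji | rfl
  · rw [← sdiff_sdiff_right_self]
    exact (hy.infinite i).sdiff (hy.diff_finite hji)
  · simpa using hy.infinite j

theorem evenPart_inter_finite {i j : ι} (hij : i ≠ j) :
    (evenPart (y i) ∩ evenPart (y j)).Finite := by
  wlog hji : j < i generalizing i j
  · rw [inter_comm]
    exact this hij.symm (hij.lt_or_gt.resolve_right hji)
  refine (hy.diff_oddPart_finite hji).subset fun n ⟨hni, hnj⟩ =>
    ⟨evenPart_subset (hy.infinite i) hni, ?_⟩
  exact (disjoint_evenPart_oddPart (hy.infinite j)).notMem_of_mem_left hnj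

theorem evenPart_diff_infinite {i j : ι} (hij : i ≠ j) :
    (evenPart (y i) \ evenPart (y j)).Infinite := by
  rw [← sdiff_self_inter]
  exact (evenPart_infinite (hy.infinite i)).sdiff (hy.evenPart_inter_finite hij)

theorem injective : Injective y := by
  intro i j hij
  by_contra hne
  wlog hji : j < i generalizing i j
  · exact this hij.symm (Ne.symm hne) (lt_of_le_of_ne (not_lt.1 hji) hne)
  have := hy.diff_oddPart_finite hji
  rw [hij] at this
  exact not_diff_oddPart_finite (hy.infinite j) (evenPart_subset (hy.infinite j)) this

theorem evenPart_injective : Injective (evenPart ∘ y) := by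
  intro i j hij
  by_contra hne
  have := hy.evenPart_inter_finite hne
  rw [show evenPart (y i) = evenPart (y j) from hij, inter_self] at this
  exact evenPart_infinite (hy.infinite j) this

theorem evenPart_ne (i j : ι) : evenPart (y i) ≠ y j := by
  intro h
  have hi := hy.infinite i
  rcases lt_trichotomy i j with hij | rfl | hji
  · refine not_diff_oddPart_finite hi subset_rfl ?_
    rw [h]; exact hy.diff_oddPart_finite hij
  · have hodd : oddPart (y i) = ∅ :=
      (disjoint_evenPart_oddPart hi).symm.eq_bot_of_le ((oddPart_subset hi).trans h.ge)
    exact oddPart_infinite hi (hodd ▸ finite_empty)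
  · refine not_diff_oddPart_finite (hy.infinite j) (evenPart_subset (hy.infinite j)) ?_
    exact (hy.diff_oddPart_finite hji).subset (sdiff_subset_sdiff_left (h ▸ evenPart_subset hi))

theorem inter_offDiagEventually_le_union_ge :
    (offDiagEventually (· ≤ ·) ∪ offDiagEventually (· ≥ ·)) ∩
        ((range fun i => (evenPart (y i)).boolIndicator) ×ˢ
            (range fun i => (evenPart (y i)).boolIndicator) ∪
          (range fun i => (y i).boolIndicator) ×ˢ (range fun i => (y i).boolIndicator)) =
      (range fun i => (y i).boolIndicator) ×ˢ (range fun i => (y i).boolIndicator) \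
        diagonal (ℕ → Bool) := by
  refine inter_prod_self_union_prod_self_eq ?_ ?_ <;>
    simp only [forall_mem_range, mem_union, boolIndicator_mk_mem_offDiagEventually_le,
      boolIndicator_mk_mem_offDiagEventually_ge, boolIndicator_injective.ne_iff]
  · rintro i j (⟨hne, h⟩ | ⟨hne, h⟩)
    · exact hy.evenPart_diff_infinite (ne_of_apply_ne (evenPart ∘ y) hne) h
    · exact hy.evenPart_diff_infinite (ne_of_apply_ne (evenPart ∘ y) hne.symm) h
  · intro i j
    rw [← and_or_left, and_iff_left (hy.diff_finite_or_diff_finite i j)]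

theorem inter_offDiagEventually_and :
    offDiagEventually (fun a b => (a && b) = false) ∩
        ((range fun i => (evenPart (y i)).boolIndicator) ×ˢ
            (range fun i => (evenPart (y i)).boolIndicator) ∪
          (range fun i => (y i).boolIndicator) ×ˢ (range fun i => (y i).boolIndicator)) =
      (range fun i => (evenPart (y i)).boolIndicator) ×ˢ
          (range fun i => (evenPart (y i)).boolIndicator) \ diagonal (ℕ → Bool) := by
  rw [union_comm]
  refine inter_prod_self_union_prod_self_eq ?_ ?_ <;>
    simp only [forall_mem_range, boolIndicator_mk_mem_offDiagEventually_and,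
      boolIndicator_injective.ne_iff]
  · exact fun i j h => hy.inter_infinite i j h.2
  · exact fun i j => and_iff_left_of_imp fun hne =>
      hy.evenPart_inter_finite (ne_of_apply_ne (evenPart ∘ y) hne)

end IsOddTower

def IsPseudoIntersection {α : Type*} (T : Set (Set α)) (z : Set α) : Prop :=
  z.Infinite ∧ ∀ t ∈ T, (z \ t).Finite

def SmallChainsHavePseudoIntersections : Prop :=
  ∀ T : Set (Set ℕ), (∀ y ∈ T, y.Infinite) → (∀ u ∈ T, ∀ v ∈ T, (u \ v).Finite ∨ (v \ u).Finite) →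
    Cardinal.mk T < Cardinal.continuum → ∃ z, IsPseudoIntersection T z

/-- An infinite pseudointersection of `T` outside `B` if there is one, otherwise any infinite
pseudointersection of `T`. -/
noncomputable def pseudoIntersectionAvoiding {α : Type*} (B T : Set (Set α)) : Set α :=
  Classical.epsilon fun z => IsPseudoIntersection T z ∧ (z ∉ B ∨ {z | IsPseudoIntersection T z} ⊆ B)

theorem pseudoIntersectionAvoiding_spec {α : Type*} {B T : Set (Set α)}
    (h : ∃ z, IsPseudoIntersection T z) :
    IsPseudoIntersection T (pseudoIntersectionAvoiding B T) ∧
      (pseudoIntersectionAvoiding B T ∈ B → {z | IsPseudoIntersection T z} ⊆ B) := by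
  obtain ⟨z, hz⟩ := h
  have hex : ∃ z, IsPseudoIntersection T z ∧ (z ∉ B ∨ {z | IsPseudoIntersection T z} ⊆ B) := by
    by_cases hB : {z | IsPseudoIntersection T z} ⊆ B
    · exact ⟨z, hz, .inr hB⟩
    · obtain ⟨w, hw, hwB⟩ := not_subset.1 hB
      exact ⟨w, hw, .inl hwB⟩
  obtain ⟨hpi, hB⟩ := Classical.epsilon_spec hex
  exact ⟨hpi, fun hmem => hB.resolve_left (not_not.2 hmem)⟩

section Tower

variable {ι : Type} [LinearOrder ι] [WellFoundedLT ι] (B : ι → Set (Set ℕ))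

noncomputable def tower : ι → Set ℕ :=
  wellFounded_lt.fix fun i rec =>
    pseudoIntersectionAvoiding (B i) (range fun j : Iio i => oddPart (rec j j.2))

theorem tower_eq (i : ι) :
    tower B i = pseudoIntersectionAvoiding (B i) (range fun j : Iio i => oddPart (tower B j)) :=
  wellFounded_lt.fix_eq _ i

variable {B} (ht : SmallChainsHavePseudoIntersections)
  (hsmall : ∀ i : ι, Cardinal.mk (Iio i) < Cardinal.continuum)
include ht hsmall

theorem tower_spec (i : ι) :
    IsPseudoIntersection (range fun j : Iio i => oddPart (tower B j)) (tower B i) ∧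
      (tower B i ∈ B i →
        {z | IsPseudoIntersection (range fun j : Iio i => oddPart (tower B j)) z} ⊆ B i) := by
  induction i using WellFoundedLT.induction with
  | ind i ih =>
    rw [tower_eq]
    refine pseudoIntersectionAvoiding_spec (ht _ ?_ ?_ (Cardinal.mk_range_le.trans_lt (hsmall i)))
    · rintro _ ⟨j, rfl⟩
      exact oddPart_infinite (ih j j.2).1.1
    · have hle : ∀ j k : Iio i, k.1 < j →
          (oddPart (tower B j) \ oddPart (tower B k)).Finite := fun j k hkj =>
        ((ih j j.2).1.2 _ ⟨⟨k, hkj⟩, rfl⟩).subset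
          (sdiff_subset_sdiff_left (oddPart_subset (ih j j.2).1.1))
      rintro _ ⟨j, rfl⟩ _ ⟨k, rfl⟩
      rcases lt_trichotomy j.1 k.1 with hjk | hjk | hkj
      · exact .inr (hle k j hjk)
      · simp [hjk]
      · exact .inl (hle j k hkj)

variable (B) in
theorem isOddTower_tower : IsOddTower (tower B) :=
  ⟨fun i => (tower_spec ht hsmall i).1.1,
    fun i j hji => (tower_spec ht hsmall i).1.2 _ ⟨⟨j, hji⟩, rfl⟩⟩

theorem evenPart_tower_mem {i j : ι} (hi : tower B i ∈ B i) (hij : i < j) :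
    evenPart (tower B j) ∈ B i := by
  have hy := isOddTower_tower B ht hsmall
  refine (tower_spec ht hsmall i).2 hi ⟨evenPart_infinite (hy.infinite j), ?_⟩
  rintro _ ⟨k, rfl⟩
  exact (hy.diff_oddPart_finite (k.2.trans hij)).subset
    (sdiff_subset_sdiff_left (evenPart_subset (hy.infinite j)))

end Tower

universe u in
theorem exists_forall_measurableSet_borel_mem_range {α ι : Type u} [TopologicalSpace α]
    [SecondCountableTopology α] (hι : Cardinal.continuum ≤ Cardinal.mk ι) :
    ∃ B : ι → Set α, ∀ s, MeasurableSet[borel α] s → s ∈ range B := by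
  have hcard : Cardinal.mk {s : Set α | MeasurableSet[borel α] s} ≤ Cardinal.mk ι := by
    rw [(TopologicalSpace.isBasis_countableBasis α).borel_eq_generateFrom]
    refine (MeasurableSpace.cardinal_measurableSet_le_continuum ?_).trans hι
    exact (Cardinal.le_aleph0_iff_set_countable.2
      (TopologicalSpace.countable_countableBasis α)).trans Cardinal.aleph0_le_continuum
  obtain ⟨e⟩ := (Cardinal.le_def _ _).1 hcard
  have : Nonempty {s : Set α | MeasurableSet[borel α] s} := ⟨⟨∅, @MeasurableSet.empty _ (borel α)⟩⟩
  exact ⟨fun i => (invFun e i).1, fun s hs =>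
    ⟨e ⟨s, hs⟩, congrArg Subtype.val (leftInverse_invFun e.injective _)⟩⟩

/-- (𝔱 = 𝔠) There are disjoint sets `X, Y ⊆ 2^ω` of cardinality `𝔠` such that `X` is
Borel `𝔠`-concentrated on `Y`, `Y² \ Δ` is relatively `F_σ` in `X² ∪ Y²`, and
`X² \ Δ` is relatively `F_σ` in `X² ∪ Y²`. -/
theorem stmt3
    (ht : ∀ T : Set (Set ℕ), (∀ y ∈ T, y.Infinite) →
      (∀ u ∈ T, ∀ v ∈ T, (u \ v).Finite ∨ (v \ u).Finite) →
      Cardinal.mk ↥T < Cardinal.continuum →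
      ∃ z : Set ℕ, z.Infinite ∧ ∀ y ∈ T, (z \ y).Finite) :
    ∃ X Y : Set (ℕ → Bool),
      Cardinal.mk ↥X = Cardinal.continuum ∧ Cardinal.mk ↥Y = Cardinal.continuum ∧
      Disjoint X Y ∧
      (∀ B : Set (ℕ → Bool), MeasurableSet[borel (ℕ → Bool)] B → Y ⊆ B →
        Cardinal.mk ↥(X \ B) < Cardinal.continuum) ∧
      (∃ F : Set ((ℕ → Bool) × (ℕ → Bool)), IsFsigma F ∧
        F ∩ (X ×ˢ X ∪ Y ×ˢ Y) = (Y ×ˢ Y) \ Set.diagonal (ℕ → Bool)) ∧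
      (∃ H : Set ((ℕ → Bool) × (ℕ → Bool)), IsFsigma H ∧
        H ∩ (X ×ˢ X ∪ Y ×ˢ Y) = (X ×ˢ X) \ Set.diagonal (ℕ → Bool)) := by
  let ι := Cardinal.continuum.{0}.ord.ToType
  have hι : Cardinal.mk ι = Cardinal.continuum := Cardinal.mk_ord_toType _
  have hord : (Cardinal.mk ι).ord = Ordinal.type (α := ι) (· < ·) := by
    rw [hι]; exact (Ordinal.type_toType _).symm
  have hsmall (i : ι) : Cardinal.mk (Iio i) < Cardinal.continuum :=
    (Cardinal.mk_Iio_lt i hord).trans_eq hι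
  obtain ⟨Bor, hBor⟩ := exists_forall_measurableSet_borel_mem_range (α := ℕ → Bool) hι.ge
  set y := tower fun i => boolIndicator ⁻¹' Bor i
  have hy : IsOddTower y := isOddTower_tower _ ht hsmall
  refine ⟨range fun i => (evenPart (y i)).boolIndicator, range fun i => (y i).boolIndicator,
    ?_, ?_, ?_, ?_, ⟨_, (isFsigma_offDiagEventually _).union (isFsigma_offDiagEventually _),
      hy.inter_offDiagEventually_le_union_ge⟩,
    ⟨_, isFsigma_offDiagEventually _, hy.inter_offDiagEventually_and⟩⟩
  · exact (Cardinal.mk_range_eq _ (boolIndicator_injective.comp hy.evenPart_injective)).trans hι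
  · exact (Cardinal.mk_range_eq _ (boolIndicator_injective.comp hy.injective)).trans hι
  · exact disjoint_range_iff.2 fun i j h => hy.evenPart_ne i j (boolIndicator_injective h)
  · intro B hB hYB
    obtain ⟨i, rfl⟩ := hBor B hB
    have hsub : (range fun j => (evenPart (y j)).boolIndicator) \ Bor i ⊆
        (fun j => (evenPart (y j)).boolIndicator) '' Iic i := by
      rintro _ ⟨⟨j, rfl⟩, hj⟩
      have hi : y i ∈ boolIndicator ⁻¹' Bor i := hYB (mem_range_self i)
      exact ⟨j, not_lt.1 fun hij => hj (evenPart_tower_mem ht hsmall hi hij), rfl⟩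
    exact (Cardinal.mk_le_mk_of_subset hsub).trans_lt (Cardinal.mk_image_le.trans_lt
      ((Cardinal.mk_Iic_lt i hord (Cardinal.aleph0_le_continuum.trans hι.ge)).trans_eq hι))
end

section
/- Let M be a metrizable topological space and X ⊆ M. If X is an F_σ subset of M, then the space M(X) is metrizable, where M(X) is the set M equipped with the coarsest topology refining the topology of M in which every point of X is isolated (i.e., the topology generated by the open sets of M together with the singletons {x} for x ∈ X). -/
/-!
Write `X = ⋃ n, C n` with every `C n` closed and weigh a point `y` by `r y = 2⁻ⁿ`, where `n` is
the first index with `y ∈ C n` (and `r y = 0` off `X`). Since `{r ≥ 2⁻ⁿ}` is a finite union of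
closed sets, `r` is upper semicontinuous. For a metric `d` inducing the topology of `M`, setting
`e x y = max (d x y) (max (r x) (r y))` for `x ≠ y` gives another metric. A point with `r x > 0` is
at `e`-distance at least `r x` from all other points, hence isolated; at a point with `r x = 0`,
the `e`-ball of radius `ε` contains the `d`-ball of radius `ε` intersected with `{r < ε}`, which
is a neighbourhood by upper semicontinuity. So `e` induces the topology of `M(X)`.
-/

open Topology

/-- The Michael-line-like topology `M(X)`: the topology generated by the open
sets of `M` together with the singletons `{x}` for `x ∈ X`. -/
def michael {M : Type*} (t : TopologicalSpace M) (X : Set M) : TopologicalSpace M :=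
  TopologicalSpace.generateFrom ({U | IsOpen[t] U} ∪ {S | ∃ x ∈ X, S = {x}})

open Filter

section michael

variable {M : Type*} [t : TopologicalSpace M] {X : Set M} {x : M}

theorem nhds_michael_of_mem (hx : x ∈ X) : @nhds M (michael t X) x = pure x := by
  refine le_antisymm ?_ (@pure_le_nhds M (michael t X) x)
  rw [michael, TopologicalSpace.nhds_generateFrom]
  exact iInf₂_le {x} ⟨rfl, Or.inr ⟨x, hx, rfl⟩⟩ |>.trans (principal_singleton x).le

theorem nhds_michael_of_notMem (hx : x ∉ X) : @nhds M (michael t X) x = 𝓝 x := by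
  have hg : {s | x ∈ s ∧ s ∈ {U | IsOpen[t] U} ∪ {S | ∃ x ∈ X, S = {x}}} =
      {s | x ∈ s ∧ IsOpen s} := by
    ext s
    refine and_congr_right fun hxs => or_iff_left ?_
    rintro ⟨y, hy, rfl⟩
    exact hx (Set.mem_singleton_iff.mp hxs ▸ hy)
  rw [michael, TopologicalSpace.nhds_generateFrom, nhds_def, hg]

end michael

theorem metrizableSpace_of_hasBasis_nhds {M : Type*} (τ : TopologicalSpace M) (e : M → M → ℝ)
    (e_self : ∀ x, e x x = 0) (e_comm : ∀ x y, e x y = e y x)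
    (e_triangle : ∀ x y z, e x z ≤ e x y + e y z) (e_eq : ∀ x y, e x y = 0 → x = y)
    (h : ∀ x, (@nhds M τ x).HasBasis (0 < ·) fun ε => {y | e x y < ε}) :
    @TopologicalSpace.MetrizableSpace M τ := by
  let _ := τ
  let _ := MetricSpace.ofDistTopology e e_self e_comm e_triangle
    (fun s => by simp only [isOpen_iff_mem_nhds, (h _).mem_iff, Set.subset_def]; rfl) e_eq
  infer_instance

section isolatingDist

variable {M : Type*} [MetricSpace M] {r : M → ℝ} {x y : M}

variable (r) in
open Classical in
noncomputable def isolatingDist (x y : M) : ℝ :=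
  if x = y then 0 else max (dist x y) (max (r x) (r y))

@[simp]
theorem isolatingDist_self (x : M) : isolatingDist r x x = 0 := if_pos rfl

theorem isolatingDist_of_ne (h : x ≠ y) :
    isolatingDist r x y = max (dist x y) (max (r x) (r y)) := if_neg h

theorem dist_le_isolatingDist (x y : M) : dist x y ≤ isolatingDist r x y := by
  rcases eq_or_ne x y with rfl | h
  · simp
  · exact (isolatingDist_of_ne h).ge.trans' (le_max_left _ _)

theorem le_isolatingDist_left (h : x ≠ y) : r x ≤ isolatingDist r x y :=
  (isolatingDist_of_ne h).ge.trans' (le_max_of_le_right (le_max_left _ _))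

theorem le_isolatingDist_right (h : x ≠ y) : r y ≤ isolatingDist r x y :=
  (isolatingDist_of_ne h).ge.trans' (le_max_of_le_right (le_max_right _ _))

theorem isolatingDist_comm (x y : M) : isolatingDist r x y = isolatingDist r y x := by
  rcases eq_or_ne x y with rfl | h
  · rfl
  · rw [isolatingDist_of_ne h, isolatingDist_of_ne h.symm, dist_comm, max_comm (r x)]

theorem isolatingDist_triangle (x y z : M) :
    isolatingDist r x z ≤ isolatingDist r x y + isolatingDist r y z := by
  have nonneg (a b : M) : 0 ≤ isolatingDist r a b := dist_nonneg.trans (dist_le_isolatingDist a b)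
  rcases eq_or_ne x z with rfl | hxz
  · simpa using add_nonneg (nonneg x y) (nonneg y x)
  rcases eq_or_ne x y with rfl | hxy
  · simp
  rcases eq_or_ne y z with rfl | hyz
  · simp
  rw [isolatingDist_of_ne hxz]
  refine max_le ?_ (max_le ?_ ?_)
  · exact (dist_triangle x y z).trans
      (add_le_add (dist_le_isolatingDist x y) (dist_le_isolatingDist y z))
  · exact (le_isolatingDist_left hxy).trans (le_add_of_nonneg_right (nonneg y z))
  · exact (le_isolatingDist_right hyz).trans (le_add_of_nonneg_left (nonneg x y))

theorem eq_of_isolatingDist_eq_zero (x y : M) (h : isolatingDist r x y = 0) : x = y :=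
  dist_le_zero.mp (h ▸ dist_le_isolatingDist x y)

theorem hasBasis_nhds_michael_isolatingDist (hr : UpperSemicontinuous r) (x : M) :
    (@nhds M (michael inferInstance {y | 0 < r y}) x).HasBasis (0 < ·)
      fun ε => {y | isolatingDist r x y < ε} := by
  by_cases hx : 0 < r x
  · rw [nhds_michael_of_mem (show x ∈ {y | 0 < r y} from hx)]
    refine (hasBasis_pure x).to_hasBasis' (fun _ _ => ⟨r x, hx, fun y hy => ?_⟩)
      fun ε hε => by simpa using hε
    by_contra hne
    exact (le_isolatingDist_left (Ne.symm hne)).not_gt hy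
  · rw [nhds_michael_of_notMem (show x ∉ {y | 0 < r y} from hx)]
    refine Metric.nhds_basis_ball.to_hasBasis' (fun ε hε => ⟨ε, hε, fun y hy => ?_⟩)
      fun ε hε => ?_
    · rw [Metric.mem_ball, dist_comm]
      exact (dist_le_isolatingDist x y).trans_lt hy
    · filter_upwards [Metric.ball_mem_nhds x hε, hr x ε (by linarith)] with y hyx hyr
      rcases eq_or_ne x y with rfl | hne
      · simpa using hε
      · rw [isolatingDist_of_ne hne, dist_comm]
        exact max_lt hyx (max_lt (by linarith) hyr)

end isolatingDist

section fsigmaWeight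

variable {Z : Type*} (C : ℕ → Set Z) {y : Z} {n : ℕ}

open Classical in
noncomputable def fsigmaWeight (y : Z) : ℝ :=
  if h : ∃ n, y ∈ C n then 2⁻¹ ^ Nat.find h else 0

theorem fsigmaWeight_pos_iff : 0 < fsigmaWeight C y ↔ y ∈ ⋃ n, C n := by
  rw [Set.mem_iUnion, fsigmaWeight]
  split_ifs with h <;> simp [h]

variable {C}

theorem fsigmaWeight_le_of_notMem (h : ∀ k < n, y ∉ C k) : fsigmaWeight C y ≤ 2⁻¹ ^ n := by
  classical
  rw [fsigmaWeight]
  split_ifs with hy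
  · exact pow_le_pow_of_le_one (by norm_num) (by norm_num)
      (not_lt.mp fun hlt => h _ hlt (Nat.find_spec hy))
  · positivity

theorem upperSemicontinuous_fsigmaWeight [TopologicalSpace Z] (hC : ∀ n, IsClosed (C n)) :
    UpperSemicontinuous (fsigmaWeight C) := by
  classical
  intro x c hc
  obtain ⟨n, hnc, hxn⟩ : ∃ n, (2⁻¹ : ℝ) ^ n < c ∧ ∀ k < n, x ∉ C k := by
    by_cases hx : ∃ n, x ∈ C n
    · refine ⟨Nat.find hx, ?_, fun k hk => Nat.find_min hx hk⟩
      simpa [fsigmaWeight, hx] using hc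
    · obtain ⟨n, hn⟩ := exists_pow_lt_of_lt_one (y := (2⁻¹ : ℝ))
        (by simpa [fsigmaWeight, hx] using hc) (by norm_num)
      exact ⟨n, hn, fun k _ hk => hx ⟨k, hk⟩⟩
  have : ∀ᶠ y in 𝓝 x, ∀ k ∈ Set.Iio n, y ∉ C k :=
    (eventually_all_finite (Set.finite_Iio n)).mpr fun k hk =>
      (hC k).isOpen_compl.mem_nhds (hxn k hk)
  filter_upwards [this] with y hy
  exact (fsigmaWeight_le_of_notMem hy).trans_lt hnc

end fsigmaWeight

theorem IsFsigma.exists_upperSemicontinuous {Z : Type*} [TopologicalSpace Z] {X : Set Z}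
    (hX : IsFsigma X) : ∃ r : Z → ℝ, UpperSemicontinuous r ∧ X = {y | 0 < r y} := by
  obtain ⟨C, hC, rfl⟩ := hX
  exact ⟨fsigmaWeight C, upperSemicontinuous_fsigmaWeight hC,
    Set.ext fun y => (fsigmaWeight_pos_iff C).symm⟩

/-- If `M` is metrizable and `X ⊆ M` is `F_σ` in `M`, then `M(X)` is metrizable. -/
theorem stmt4 {M : Type*} [t : TopologicalSpace M] [TopologicalSpace.MetrizableSpace M]
    (X : Set M) (hX : IsFsigma X) :
    @TopologicalSpace.MetrizableSpace M (michael t X) := by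
  let _ := TopologicalSpace.metrizableSpaceMetric M
  obtain ⟨r, hr, rfl⟩ := hX.exists_upperSemicontinuous
  exact metrizableSpace_of_hasBasis_nhds _ (isolatingDist r) isolatingDist_self
    isolatingDist_comm isolatingDist_triangle eq_of_isolatingDist_eq_zero
    (hasBasis_nhds_michael_isolatingDist hr)
end

section
/- Let M be a metrizable topological space and X ⊆ M. If the space M(X) is metrizable, where M(X) is the set M equipped with the topology generated by the open sets of M together with the singletons {x} for x ∈ X, then X is an F_σ subset of M. -/
open Topology

lemma michael_nhd {M : Type*} {t : TopologicalSpace M} {X : Set M} {V : Set M}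
    (hV : IsOpen[michael t X] V) {y : M} (hy : y ∈ V) (hyX : y ∉ X) :
    ∃ U, IsOpen[t] U ∧ y ∈ U ∧ U ⊆ V := by
  induction hV with
  | basic S hS =>
    rcases hS with hS | ⟨x, hx, rfl⟩
    · exact ⟨S, hS, hy, le_refl _⟩
    · exact absurd (hy ▸ hx) hyX
  | univ => exact ⟨Set.univ, isOpen_univ, trivial, le_refl _⟩
  | inter A B _ _ ihA ihB =>
    obtain ⟨U1, hU1, hyU1, hU1A⟩ := ihA hy.1
    obtain ⟨U2, hU2, hyU2, hU2B⟩ := ihB hy.2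
    exact ⟨U1 ∩ U2, hU1.inter hU2, ⟨hyU1, hyU2⟩,
      fun z hz => ⟨hU1A hz.1, hU2B hz.2⟩⟩
  | sUnion S _ ih =>
    obtain ⟨A, hA, hyA⟩ := hy
    obtain ⟨U, hU, hyU, hUA⟩ := ih A hA hyA
    exact ⟨U, hU, hyU, hUA.trans (Set.subset_sUnion_of_mem hA)⟩

lemma michael_isOpen_X {M : Type*} (t : TopologicalSpace M) (X : Set M) :
    IsOpen[michael t X] X := by
  have : X = ⋃₀ {S : Set M | ∃ x ∈ X, S = {x}} := by
    ext z
    simp only [Set.mem_sUnion, Set.mem_setOf_eq]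
    constructor
    · exact fun hz => ⟨{z}, ⟨z, hz, rfl⟩, rfl⟩
    · rintro ⟨S, ⟨x, hx, rfl⟩, hz⟩; rwa [Set.mem_singleton_iff.mp hz]
  have h1 : IsOpen[michael t X] (⋃₀ {S : Set M | ∃ x ∈ X, S = {x}}) :=
    TopologicalSpace.GenerateOpen.sUnion _
      (fun S hS => TopologicalSpace.GenerateOpen.basic _ (Or.inr hS))
  rwa [← this] at h1

/-- In a metrizable space, every closed set is a countable intersection of open sets. -/
lemma closed_eq_iInter_open {M : Type*} [m : TopologicalSpace M]
    [TopologicalSpace.MetrizableSpace M] {A : Set M} (hA : IsClosed A) :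
    ∃ f : ℕ → Set M, (∀ n, IsOpen (f n)) ∧ A = ⋂ n, f n := by
  letI := TopologicalSpace.metrizableSpaceMetric M
  exact hA.isGδ.eq_iInter_nat

/-- If `M` is metrizable and `M(X)` is metrizable, then `X` is `F_σ` in `M`. -/
theorem stmt5 {M : Type*} [t : TopologicalSpace M] [TopologicalSpace.MetrizableSpace M]
    (X : Set M) (h : @TopologicalSpace.MetrizableSpace M (michael t X)) :
    IsFsigma X := by
  have hXopen : IsOpen[michael t X] X := michael_isOpen_X t X
  obtain ⟨f, hfopen, hfX⟩ :
      ∃ f : ℕ → Set M, (∀ n, IsOpen[michael t X] (f n)) ∧ Xᶜ = ⋂ n, f n :=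
    @closed_eq_iInter_open M (michael t X) h Xᶜ (@isClosed_compl_iff M (michael t X) X |>.mpr hXopen)
  -- each (f n)ᶜ is contained in X and is closed in M(X)
  refine ⟨fun n => closure[t] (f n)ᶜ, fun n => isClosed_closure, ?_⟩
  apply Set.Subset.antisymm
  · -- X ⊆ ⋃ n, closure (f n)ᶜ
    intro x hx
    have : x ∈ ⋃ n, (f n)ᶜ := by
      rw [← Set.compl_iInter, ← hfX, compl_compl]; exact hx
    obtain ⟨n, hn⟩ := Set.mem_iUnion.mp this
    exact Set.mem_iUnion.mpr ⟨n, subset_closure hn⟩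
  · -- ⋃ n, closure (f n)ᶜ ⊆ X
    intro y hy
    obtain ⟨n, hn⟩ := Set.mem_iUnion.mp hy
    by_contra hyX
    -- y ∈ closure[t] (f n)ᶜ, y ∉ X; show y ∈ (f n)ᶜ ⊆ X, contradiction
    have hsub : (f n)ᶜ ⊆ X := by
      intro z hz
      by_contra hzX
      have hz2 : z ∈ Xᶜ := hzX
      rw [hfX] at hz2
      exact hz (Set.mem_iInter.mp hz2 n)
    have hyfn : y ∈ (f n)ᶜ := by
      by_contra hyf
      obtain ⟨U, hU, hyU, hUf⟩ := michael_nhd (hfopen n) (not_not.mp hyf) hyX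
      obtain ⟨z, hzU, hzf⟩ := mem_closure_iff.mp hn U hU hyU
      exact hzf (hUf hzU)
    exact hyX (hsub hyfn)
end

section
/- Let M be a metrizable topological space and X ⊆ M any subset. Then the space M(X) is paracompact, where M(X) is the set M equipped with the topology generated by the open sets of M together with the singletons {x} for x ∈ X. -/
open Topology Set

/-!
Given an open cover `u` of `M(X)`, the `M`-interiors of its members cover an `M`-open set `W`,
and every point outside `W` lies in `X`, since an `M(X)`-open set contains an `M`-neighbourhood
of each of its points outside `X`. As an open subspace of `M`, `W` is metrizable, hence
paracompact, so the interiors have a locally finite refinement there. Adding the singletons of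
the points outside `W`, which are isolated in `M(X)` and form a closed set, gives a locally
finite refinement of `u`.
-/

theorem locallyFinite_singleton_of_isClosed {Y : Type*} [TopologicalSpace Y] {s : Set Y}
    (hs : IsClosed s) (hiso : ∀ x ∈ s, IsOpen ({x} : Set Y)) :
    LocallyFinite fun x : s => ({(x : Y)} : Set Y) := by
  intro y
  by_cases hy : y ∈ s
  · refine ⟨{y}, (hiso y hy).mem_nhds rfl, (finite_singleton (⟨y, hy⟩ : s)).subset ?_⟩
    rintro x ⟨z, hzx, hzy⟩
    exact Subtype.ext ((mem_singleton_iff.mp hzx).symm.trans (mem_singleton_iff.mp hzy))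
  · exact ⟨sᶜ, hs.isOpen_compl.mem_nhds hy, by simp⟩

section Michael

variable {M : Type*} [t : TopologicalSpace M] {X : Set M}

theorem isOpen_michael_of_isOpen {U : Set M} (hU : IsOpen U) : IsOpen[michael t X] U :=
  .basic U (.inl hU)

theorem isOpen_michael_singleton {x : M} (hx : x ∈ X) : IsOpen[michael t X] {x} :=
  .basic _ (.inr ⟨x, hx, rfl⟩)

theorem michael_le : michael t X ≤ t := fun _ => isOpen_michael_of_isOpen

theorem diff_subset_interior_of_isOpen_michael {s : Set M} (hs : IsOpen[michael t X] s) :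
    s \ X ⊆ interior s := by
  induction hs with
  | basic u hu =>
    rcases hu with hu | ⟨x, hx, rfl⟩
    · rw [hu.interior_eq]
      exact sdiff_subset
    · rintro y ⟨rfl, hyX⟩
      exact absurd hx hyX
  | univ => simp
  | inter a b _ _ iha ihb =>
    rw [interior_inter]
    exact fun y hy => ⟨iha ⟨hy.1.1, hy.2⟩, ihb ⟨hy.1.2, hy.2⟩⟩
  | sUnion S _ ih =>
    rintro y ⟨⟨s, hsS, hys⟩, hyX⟩
    exact interior_mono (subset_sUnion_of_mem hsS) (ih s hsS ⟨hys, hyX⟩)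

theorem compl_iUnion_interior_subset_of_michael_cover {ι : Sort*} {u : ι → Set M}
    (hu : ∀ i, IsOpen[michael t X] (u i)) (hcov : ⋃ i, u i = univ) :
    (⋃ i, interior (u i))ᶜ ⊆ X := by
  intro x hx
  by_contra hxX
  obtain ⟨i, hi⟩ := iUnion_eq_univ_iff.mp hcov x
  exact hx (mem_iUnion.mpr ⟨i, diff_subset_interior_of_isOpen_michael (hu i) ⟨hi, hxX⟩⟩)

theorem locallyFinite_michael_image_val {ι : Type*} {W : Set M} (hW : IsOpen W)
    (hWX : Wᶜ ⊆ X) {v : ι → Set W} (hv : LocallyFinite v) :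
    @LocallyFinite ι M (michael t X) fun i => Subtype.val '' v i := by
  intro x
  by_cases hx : x ∈ W
  · obtain ⟨n, hn, hfin⟩ := hv ⟨x, hx⟩
    refine ⟨Subtype.val '' n,
      nhds_mono michael_le (hW.isOpenMap_subtype_val.image_mem_nhds hn), hfin.subset ?_⟩
    rintro i ⟨-, ⟨y, hyv, rfl⟩, ⟨z, hzn, hzy⟩⟩
    exact ⟨y, hyv, Subtype.val_injective hzy ▸ hzn⟩
  · refine ⟨{x}, @IsOpen.mem_nhds M (michael t X) _ _ (isOpen_michael_singleton (hWX hx)) rfl,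
      by simp [hx]⟩

theorem paracompactSpace_michael (h : ∀ W : Set M, IsOpen W → ParacompactSpace W) :
    @ParacompactSpace M (michael t X) := by
  refine @ParacompactSpace.mk M (michael t X) fun α u hu hcov => ?_
  set W := ⋃ a, interior (u a)
  have hW : IsOpen W := isOpen_iUnion fun _ => isOpen_interior
  have hWX : Wᶜ ⊆ X := compl_iUnion_interior_subset_of_michael_cover hu hcov
  have hWc : IsClosed[michael t X] Wᶜ :=
    @IsClosed.mk M (michael t X) _ (by simpa using isOpen_michael_of_isOpen hW)
  obtain ⟨β, v, hvo, hvcov, hvlf, hvref⟩ := (h W hW).locallyFinite_refinement α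
    (fun a => Subtype.val ⁻¹' interior (u a))
    (fun _ => isOpen_interior.preimage continuous_subtype_val)
    (by ext ⟨x, hx⟩; simpa using mem_iUnion.mp hx)
  refine ⟨β ⊕ ↥Wᶜ, Sum.elim (fun b => Subtype.val '' v b) fun x => {(x : M)},
    ?_, ?_, ?_, ?_⟩
  · rintro (b | x)
    · exact isOpen_michael_of_isOpen (hW.isOpenMap_subtype_val _ (hvo b))
    · exact isOpen_michael_singleton (hWX x.2)
  · refine eq_univ_of_forall fun x => ?_
    by_cases hx : x ∈ W
    · obtain ⟨b, hb⟩ := iUnion_eq_univ_iff.mp hvcov ⟨x, hx⟩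
      exact mem_iUnion.mpr ⟨.inl b, ⟨x, hx⟩, hb, rfl⟩
    · exact mem_iUnion.mpr ⟨.inr ⟨x, hx⟩, rfl⟩
  · exact @LocallyFinite.sumElim _ _ _ (michael t X) _ _
      (locallyFinite_michael_image_val hW hWX hvlf)
      (@locallyFinite_singleton_of_isClosed M (michael t X) _ hWc
        fun x hx => isOpen_michael_singleton (hWX hx))
  · rintro (b | x)
    · obtain ⟨a, ha⟩ := hvref b
      exact ⟨a, image_subset_iff.mpr fun y hy => interior_subset (s := u a) (ha hy)⟩
    · obtain ⟨a, ha⟩ := iUnion_eq_univ_iff.mp hcov x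
      exact ⟨a, singleton_subset_iff.mpr ha⟩

end Michael

/-- If `M` is metrizable, then `M(X)` is paracompact for any `X ⊆ M`. -/
theorem stmt7 {M : Type*} [t : TopologicalSpace M] [TopologicalSpace.MetrizableSpace M]
    (X : Set M) :
    @ParacompactSpace M (michael t X) :=
  paracompactSpace_michael fun W _ =>
    letI := TopologicalSpace.metrizableSpaceMetric W
    inferInstance
end

section
/- Let M be a separable metrizable space, let X ⊆ M, and let Y = M \ X. Suppose X is Borel concentrated on Y, i.e., for every Borel set B ⊆ M, if Y ⊆ B then X \ B is countable. Then the space M(X) is Lindelöf, where M(X) is the set M equipped with the topology generated by the open sets of M together with the singletons {x} for x ∈ X. -/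
open MeasureTheory

open Topology

lemma michael_open_rep {M : Type*} (t : TopologicalSpace M) (X : Set M) {S : Set M}
    (h : IsOpen[michael t X] S) :
    ∃ U Z : Set M, IsOpen[t] U ∧ Z ⊆ X ∧ S = U ∪ Z := by
  induction h with
  | basic s hs =>
    rcases hs with hs | ⟨x, hx, rfl⟩
    · exact ⟨s, ∅, hs, by simp, by simp⟩
    · exact ⟨∅, {x}, isOpen_empty, by simpa, by simp⟩
  | univ => exact ⟨Set.univ, ∅, isOpen_univ, by simp, by simp⟩
  | inter s₁ s₂ _ _ ih₁ ih₂ =>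
    obtain ⟨U₁, Z₁, hU₁, hZ₁, rfl⟩ := ih₁
    obtain ⟨U₂, Z₂, hU₂, hZ₂, rfl⟩ := ih₂
    refine ⟨U₁ ∩ U₂, (Z₁ ∩ (U₂ ∪ Z₂)) ∪ ((U₁ ∪ Z₁) ∩ Z₂), hU₁.inter hU₂, ?_, ?_⟩
    · intro z hz
      rcases hz with ⟨hz, _⟩ | ⟨_, hz⟩
      · exact hZ₁ hz
      · exact hZ₂ hz
    · ext m
      constructor
      · rintro ⟨h1 | h1, h2 | h2⟩
        · exact Or.inl ⟨h1, h2⟩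
        · exact Or.inr (Or.inr ⟨Or.inl h1, h2⟩)
        · exact Or.inr (Or.inl ⟨h1, Or.inl h2⟩)
        · exact Or.inr (Or.inl ⟨h1, Or.inr h2⟩)
      · rintro (⟨h1, h2⟩ | (⟨h1, h2⟩ | ⟨h1, h2⟩))
        · exact ⟨Or.inl h1, Or.inl h2⟩
        · exact ⟨Or.inr h1, h2⟩
        · exact ⟨h1, Or.inr h2⟩
  | sUnion s _ ih =>
    choose U Z hU hZ hs using ih
    refine ⟨⋃ (c : Set M) (hc : c ∈ s), U c hc, ⋃ (c : Set M) (hc : c ∈ s), Z c hc,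
      isOpen_iUnion fun c => isOpen_iUnion fun hc => hU c hc,
      Set.iUnion_subset fun c => Set.iUnion_subset fun hc => hZ c hc, ?_⟩
    ext m
    simp only [Set.mem_sUnion, Set.mem_union, Set.mem_iUnion]
    constructor
    · rintro ⟨cc, hc, hm⟩
      rw [hs cc hc] at hm
      rcases hm with hm | hm
      · exact Or.inl ⟨cc, hc, hm⟩
      · exact Or.inr ⟨cc, hc, hm⟩
    · rintro (⟨cc, hc, hm⟩ | ⟨cc, hc, hm⟩)
      · exact ⟨cc, hc, by rw [hs cc hc]; exact Or.inl hm⟩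
      · exact ⟨cc, hc, by rw [hs cc hc]; exact Or.inr hm⟩

/-- If `M` is a separable metrizable space, `Y = M \ X`, and `X` is Borel
concentrated on `Y`, then `M(X)` is Lindelöf. -/
theorem stmt8 {M : Type*} [t : TopologicalSpace M] [TopologicalSpace.MetrizableSpace M]
    [TopologicalSpace.SeparableSpace M] (X Y : Set M) (hY : Y = Set.univ \ X)
    (hconc : ∀ B : Set M, MeasurableSet[borel M] B → Y ⊆ B → (X \ B).Countable) :
    @LindelofSpace M (michael t X) := by
  letI m : MetricSpace M := TopologicalSpace.metrizableSpaceMetric M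
  haveI : SecondCountableTopology M := UniformSpace.secondCountable_of_separable M
  refine @LindelofSpace.mk M (michael t X) ?_
  refine @isLindelof_of_countable_subcover M (michael t X) _ ?_
  intro ι c hc hcov
  -- decompose each cover member
  have hrep : ∀ i, ∃ U Z : Set M, IsOpen[t] U ∧ Z ⊆ X ∧ c i = U ∪ Z :=
    fun i => michael_open_rep t X (hc i)
  choose U Z hU hZ hcUZ using hrep
  set V : Set M := ⋃ i, U i with hV
  have hVopen : IsOpen[t] V := isOpen_iUnion hU
  have hVBorel : MeasurableSet[borel M] V := MeasurableSpace.measurableSet_generateFrom hVopen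
  have hYV : Y ⊆ V := by
    intro y hy
    rcases Set.mem_iUnion.mp (hcov (Set.mem_univ y)) with ⟨i, hi⟩
    rw [hcUZ i] at hi
    rcases hi with hi | hi
    · exact Set.mem_iUnion.mpr ⟨i, hi⟩
    · exact absurd (hZ i hi) (by rw [hY] at hy; exact hy.2)
  have hcount : (X \ V).Countable := hconc V hVBorel hYV
  -- countable subcover of V using hereditary Lindelöfness of t
  have hVL : IsLindelof V := HereditarilyLindelof_LindelofSets V
  obtain ⟨T1, hT1c, hT1⟩ := hVL.elim_countable_subcover U hU hV.subset
  -- for each point of X \ V pick a cover member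
  have hpick : ∀ x : M, x ∈ X \ V → ∃ i, x ∈ c i :=
    fun x _ => Set.mem_iUnion.mp (hcov (Set.mem_univ x))
  choose f hf using hpick
  refine ⟨T1 ∪ (fun p : ↥(X \ V) => f p p.2) '' Set.univ, ?_, ?_⟩
  · exact hT1c.union (Set.Countable.image (by
      haveI := hcount.to_subtype; exact Set.countable_univ) _)
  · intro mpt _
    by_cases hm : mpt ∈ V
    · rcases Set.mem_iUnion₂.mp (hT1 hm) with ⟨i, hi, hmi⟩
      exact Set.mem_iUnion₂.mpr ⟨i, Or.inl hi, by rw [hcUZ i]; exact Or.inl hmi⟩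
    · have hmX : mpt ∈ X := by
        by_contra hmX
        have : mpt ∈ Y := by rw [hY]; exact ⟨trivial, hmX⟩
        exact hm (hYV this)
      have hmXV : mpt ∈ X \ V := ⟨hmX, hm⟩
      refine Set.mem_iUnion₂.mpr ⟨f mpt hmXV, Or.inr ⟨⟨mpt, hmXV⟩, trivial, rfl⟩, hf mpt hmXV⟩
end

section
/- For every sequence ⟨B_α : α < ω₁⟩ of Borel subsets of [ω]^ω (the space of infinite subsets of ℕ, as a subspace of 2^ω), there exists a sequence ⟨y_α : α < ω₁⟩ of infinite subsets of ℕ such that: (1) for all α < β < ω₁, y_β ⊆* y_α and y_β ≠* y_α (i.e., y_β \ y_α is finite but y_α \ y_β is infinite); and (2) for each α < ω₁, either y_α ∉ B_α or [y_α]^{*ω} ⊆ B_α, where [y]^{*ω} = {x ∈ [ω]^ω : x ⊆* y}. -/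
/-!
Every Borel set `U ⊆ 2^ω` is completely Ramsey in Ellentuck's sense: each neighbourhood `[s, A]`
contains some `[s, B]` that lies inside `U` or misses it. For open `U` this is the Galvin–Prikry
theorem, proved by Nash-Williams' accept/reject fusion; the class of completely Ramsey sets is
closed under complements and countable unions. Applied to the Borel set of points all of whose
finite modifications lie in `U`, this yields inside any infinite `A` an infinite `y` with `y ∉ U`
or `[y]^{*ω} ⊆ U`.

The sequence is built by recursion on `α < ω₁`: the countably many earlier terms form a
`⊆*`-chain, hence have an infinite pseudo-intersection `S`; the term `y_α` is found as above
inside a coinfinite subset of `S`, which makes the chain strictly decreasing mod finite.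
-/

open MeasureTheory

/-- The subset of `ℕ` coded by an element of `2^ω`. -/
def bset (u : ℕ → Bool) : Set ℕ := {n | u n = true}

open Set

lemma Set.Infinite.inter_Ioi {α : Type*} [LinearOrder α] [LocallyFiniteOrderBot α] {A : Set α}
    (hA : A.Infinite) (c : α) : (A ∩ Ioi c).Infinite := by
  simpa [sdiff_eq, compl_Iic] using hA.sdiff (finite_Iic c)

namespace GalvinPrikry

lemma exists_seq_of_forall_exists {α : Type*} (p : α → Prop) (r : α → α → Prop)
    (h : ∀ x, p x → ∃ y, r x y ∧ p y) {x₀ : α} (hx₀ : p x₀) :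
    ∃ f : ℕ → α, f 0 = x₀ ∧ (∀ n, p (f n)) ∧ ∀ n, r (f n) (f (n + 1)) := by
  choose g hgr hgp using h
  let f : ℕ → {x // p x} := fun n =>
    Nat.rec ⟨x₀, hx₀⟩ (fun _ x => ⟨g x.1 x.2, hgp x.1 x.2⟩) n
  exact ⟨fun n => (f n).1, rfl, fun n => (f n).2, fun n => hgr _ _⟩

def IsDense (P : Set ℕ → Prop) : Prop :=
  ∀ A : Set ℕ, A.Infinite → ∃ B ⊆ A, B.Infinite ∧ P B

lemma isDense_forall_mem_finset {ι : Type*} (T : Finset ι) {P : ι → Set ℕ → Prop}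
    (hP : ∀ i, Antitone (P i)) (hdense : ∀ i ∈ T, IsDense (P i)) :
    IsDense fun B => ∀ i ∈ T, P i B := by
  classical
  induction T using Finset.induction_on with
  | empty => exact fun A hA => ⟨A, subset_rfl, hA, by simp⟩
  | insert i T _ ih =>
    intro A hA
    obtain ⟨B, hBA, hB, hPB⟩ := ih (fun j hj => hdense j (Finset.mem_insert_of_mem hj)) A hA
    obtain ⟨C, hCB, hC, hPC⟩ := hdense i (Finset.mem_insert_self i T) B hB
    refine ⟨C, hCB.trans hBA, hC, Finset.forall_mem_insert _ _ _ |>.2 ⟨hPC, fun j hj => ?_⟩⟩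
    exact hP j hCB (hPB j hj)

lemma exists_fusion (Inv : Set ℕ → Set ℕ → Prop) (hInv : ∀ F, Antitone (Inv F))
    (hstep : ∀ F A, F.Finite → A.Infinite → Inv F A →
      ∃ a ∈ A, ∃ B ⊆ A ∩ Ioi a, B.Infinite ∧ Inv (insert a F) B)
    {A : Set ℕ} (hA : A.Infinite) (h₀ : Inv ∅ A) :
    ∃ D ⊆ A, D.Infinite ∧ ∀ b ∈ D, Inv (D ∩ Iic b) (D ∩ Ioi b) := by
  obtain ⟨f, hf₀, hfp, hfr⟩ := exists_seq_of_forall_exists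
    (fun p : Set ℕ × Set ℕ => p.1.Finite ∧ p.2.Infinite ∧ Inv p.1 p.2)
    (fun p q => ∃ a ∈ p.2, q.2 ⊆ p.2 ∩ Ioi a ∧ q.1 = insert a p.1)
    (fun p ⟨hF, hA, hp⟩ => by
      obtain ⟨a, ha, B, hB, hBinf, hInvB⟩ := hstep p.1 p.2 hF hA hp
      exact ⟨(insert a p.1, B), ⟨a, ha, hB, rfl⟩, hF.insert a, hBinf, hInvB⟩)
    (x₀ := (∅, A)) ⟨finite_empty, hA, h₀⟩
  choose a ha hsub hF using hfr
  have hanti : Antitone fun n => (f n).2 :=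
    antitone_nat_of_succ_le fun n => (hsub n).trans inter_subset_left
  have hmono : StrictMono a := strictMono_nat_of_lt_succ fun n => (hsub n (ha (n + 1))).2
  have hmem : ∀ {j k}, k < j → a j ∈ (f (k + 1)).2 := fun hkj => hanti hkj (ha _)
  have hstem : ∀ n, (f n).1 = a '' Iio n := by
    intro n
    induction n with
    | zero => simp [hf₀]
    | succ n ih =>
      ext x
      simp [hF, ih, Nat.le_iff_lt_or_eq, or_and_right, exists_or, eq_comm, or_comm]
  refine ⟨range a, ?_, infinite_range_of_injective hmono.injective, ?_⟩
  · rintro _ ⟨k, rfl⟩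
    simpa [hf₀] using hanti (Nat.zero_le k) (ha k)
  · rintro _ ⟨k, rfl⟩
    have hIic : range a ∩ Iic (a k) = (f (k + 1)).1 := by
      ext x
      simp only [hstem, mem_inter_iff, mem_range, mem_Iic, mem_image, mem_Iio, Nat.lt_succ_iff]
      constructor
      · rintro ⟨⟨j, rfl⟩, hj⟩; exact ⟨j, hmono.le_iff_le.mp hj, rfl⟩
      · rintro ⟨j, hj, rfl⟩; exact ⟨⟨j, rfl⟩, hmono.monotone hj⟩
    have hIoi : range a ∩ Ioi (a k) ⊆ (f (k + 1)).2 := by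
      rintro _ ⟨⟨j, rfl⟩, hj⟩
      exact hmem (hmono.lt_iff_lt.mp hj)
    rw [hIic]
    exact hInv _ hIoi (hfp (k + 1)).2.2

lemma isDense_diagonal {Q : ℕ → Set ℕ → Prop} (hQ : ∀ n, Antitone (Q n))
    (hdense : ∀ n, IsDense (Q n)) : IsDense fun D => ∀ b ∈ D, Q b (D ∩ Ioi b) := by
  intro A hA
  obtain ⟨D, hDA, hD, hQD⟩ := exists_fusion (fun F B => ∀ b ∈ F, Q b B)
    (fun F B C hBC hB b hb => hQ b hBC (hB b hb))
    (fun F A _ hA hF => by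
      obtain ⟨a, ha⟩ := hA.nonempty
      obtain ⟨B, hBA, hB, hQB⟩ := hdense a _ (hA.inter_Ioi a)
      refine ⟨a, ha, B, hBA, hB, fun b hb => ?_⟩
      rcases hb with rfl | hb
      exacts [hQB, hQ b (hBA.trans inter_subset_left) (hF b hb)])
    hA (by simp)
  exact ⟨D, hDA, hD, fun b hb => hQD b hb b ⟨hb, mem_Iic.2 le_rfl⟩⟩

/-- The Ellentuck neighbourhood `[s, A]`, except that no order between `s` and `A` is imposed. -/
def ellentuck (s : Finset ℕ) (A : Set ℕ) : Set (ℕ → Bool) :=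
  {x | (bset x).Infinite ∧ ↑s ⊆ bset x ∧ bset x ⊆ ↑s ∪ A}

lemma ellentuck_mono (s : Finset ℕ) : Monotone (ellentuck s) :=
  fun _ _ h _ ⟨hx, hs, hA⟩ => ⟨hx, hs, hA.trans (union_subset_union_right _ h)⟩

section AcceptReject

variable (U : Set (ℕ → Bool)) (s : Finset ℕ)

def Accepts (A : Set ℕ) : Prop := ellentuck s A ⊆ U

def Rejects (A : Set ℕ) : Prop := ∀ B ⊆ A, B.Infinite → ¬Accepts U s B

def Decides (A : Set ℕ) : Prop := Accepts U s A ∨ Rejects U s A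

lemma accepts_anti : Antitone (Accepts U s) :=
  fun _ _ h hA => (ellentuck_mono s h).trans hA

lemma rejects_anti : Antitone (Rejects U s) :=
  fun _ _ h hA B hB => hA B (hB.trans h)

lemma decides_anti : Antitone (Decides U s) :=
  fun _ _ h hA => hA.imp (accepts_anti U s h) (rejects_anti U s h)

lemma isDense_decides : IsDense (Decides U s) := by
  intro A hA
  by_cases h : Rejects U s A
  · exact ⟨A, subset_rfl, hA, Or.inr h⟩
  · simp only [Rejects, not_forall, not_not, exists_prop] at h
    obtain ⟨B, hBA, hB, hacc⟩ := h
    exact ⟨B, hBA, hB, Or.inl hacc⟩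

end AcceptReject

variable {U : Set (ℕ → Bool)}

lemma accepts_of_forall_accepts_insert {s : Finset ℕ} {M : Set ℕ}
    (h : ∀ a ∈ M, Accepts U (insert a s) (M ∩ Ioi a)) : Accepts U s M := by
  rintro x ⟨hx, hsx, hxM⟩
  -- split `x` at its least element `a` outside `s`
  have ha : sInf (bset x \ ↑s) ∈ bset x \ ↑s :=
    Nat.sInf_mem (hx.sdiff s.finite_toSet).nonempty
  set a := sInf (bset x \ ↑s)
  refine h a ((hxM ha.1).resolve_left ha.2) ⟨hx, ?_, fun i hi => ?_⟩
  · rw [Finset.coe_insert]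
    exact insert_subset ha.1 hsx
  · by_cases his : i ∈ s
    · exact Or.inl (by simp [his])
    rcases (Nat.sInf_le ⟨hi, his⟩ : a ≤ i).eq_or_lt with rfl | hai
    · exact Or.inl (by simp [a])
    · exact Or.inr ⟨(hxM hi).resolve_left his, hai⟩

lemma finite_setOf_accepts_insert {s : Finset ℕ} {D : Set ℕ} (hD : Rejects U s D) :
    {a ∈ D | Accepts U (insert a s) (D ∩ Ioi a)}.Finite := by
  by_contra hM
  refine hD _ (sep_subset _ _) hM (accepts_of_forall_accepts_insert fun a ha => ?_)
  exact accepts_anti U _ (inter_subset_inter_left _ (sep_subset _ _)) ha.2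

lemma exists_rejects_insert {T : Finset (Finset ℕ)} {A : Set ℕ} (hA : A.Infinite)
    (hT : ∀ t ∈ T, Rejects U t A) :
    ∃ B ⊆ A, B.Infinite ∧ ∀ a ∈ B, ∀ t ∈ T, Rejects U (insert a t) (B ∩ Ioi a) := by
  obtain ⟨D, hDA, hD, hdec⟩ := isDense_diagonal
    (Q := fun b B => ∀ t ∈ T, Decides U (insert b t) B)
    (fun b _ _ h hB t ht => decides_anti U _ h (hB t ht))
    (fun b => isDense_forall_mem_finset T (fun t => decides_anti U _)
      fun t _ => isDense_decides U _) A hA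
  set M := ⋃ t ∈ T, {a ∈ D | Accepts U (insert a t) (D ∩ Ioi a)}
  have hM : M.Finite := T.finite_toSet.biUnion fun t ht =>
    finite_setOf_accepts_insert (rejects_anti U t hDA (hT t ht))
  refine ⟨D \ M, sdiff_subset.trans hDA, hD.sdiff hM, fun a ha t ht => ?_⟩
  refine rejects_anti U _ (inter_subset_inter_left _ sdiff_subset) ?_
  exact (hdec a ha.1 t ht).resolve_left fun hacc => ha.2 (mem_biUnion ht ⟨ha.1, hacc⟩)

lemma exists_forall_rejects {s : Finset ℕ} {A : Set ℕ} (hA : A.Infinite)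
    (hs : Rejects U s A) :
    ∃ D ⊆ A, D.Infinite ∧ ∀ b ∈ D, ∀ t : Finset ℕ, s ⊆ t →
      ↑t ⊆ ↑s ∪ (D ∩ Iic b) → Rejects U t (D ∩ Ioi b) := by
  classical
  refine exists_fusion
    (fun F B => ∀ t : Finset ℕ, s ⊆ t → ↑t ⊆ ↑s ∪ F → Rejects U t B)
    (fun F B C h hB t hst hts => rejects_anti U t h (hB t hst hts))
    (fun F A hF hA hInv => ?_) hA
    fun t hst hts => Finset.Subset.antisymm (by simpa using hts) hst ▸ hs
  obtain ⟨B, hBA, hB, hrej⟩ := exists_rejects_insert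
    (T := (s ∪ hF.toFinset).powerset.filter (s ⊆ ·)) hA fun t ht => by
      simp only [Finset.mem_filter, Finset.mem_powerset] at ht
      exact hInv t ht.2 fun i hi => by simpa using ht.1 hi
  obtain ⟨a, ha⟩ := hB.nonempty
  refine ⟨a, hBA ha, B ∩ Ioi a, inter_subset_inter_left _ hBA, hB.inter_Ioi a,
    fun t hst hts => ?_⟩
  by_cases hat : a ∈ t ∧ a ∉ s
  · rw [← Finset.insert_erase hat.1]
    refine hrej a ha _ ?_
    simp only [Finset.mem_filter, Finset.mem_powerset]
    refine ⟨fun i hi => ?_, fun i hi => Finset.mem_erase.2 ⟨?_, hst hi⟩⟩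
    · obtain ⟨hia, hit⟩ := Finset.mem_erase.1 hi
      simpa [hia] using hts hit
    · rintro rfl
      exact hat.2 hi
  · refine rejects_anti U t (inter_subset_left.trans hBA) (hInv t hst fun i hi => ?_)
    rcases hts hi with h | rfl | h
    exacts [Or.inl h, Or.inl (not_and_not_right.1 hat hi), Or.inr h]

def trunc (x : ℕ → Bool) (b : ℕ) : Finset ℕ := (Finset.range (b + 1)).filter (x · = true)

lemma coe_trunc (x : ℕ → Bool) (b : ℕ) : (trunc x b : Set ℕ) = bset x ∩ Iic b := by
  ext i
  simp [trunc, bset, and_comm]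

lemma trunc_eq_of_mem_cylinder {x y : ℕ → Bool} {b : ℕ}
    (hy : y ∈ PiNat.cylinder x (b + 1)) : trunc y b = trunc x b := by
  ext i
  simp only [trunc, Finset.mem_filter, Finset.mem_range]
  exact and_congr_right fun hi => by rw [hy i hi]

lemma mem_cylinder_of_mem_ellentuck_trunc {x y : ℕ → Bool} {b : ℕ} {A : Set ℕ}
    (hA : A ⊆ Ioi b) (hy : y ∈ ellentuck (trunc x b) A) : y ∈ PiNat.cylinder x (b + 1) := by
  intro i hi
  replace hi : i ≤ b := Nat.lt_succ_iff.mp hi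
  rw [Bool.eq_iff_iff]
  constructor
  · intro hyi
    rcases hy.2.2 hyi with h | h
    · rw [coe_trunc] at h
      exact h.1
    · exact absurd (hA h) (not_lt.2 hi)
  · intro hxi
    exact hy.2.1 (by rw [coe_trunc]; exact ⟨hxi, hi⟩)

lemma mem_ellentuck_trunc {x : ℕ → Bool} {b : ℕ} {A : Set ℕ} (hx : (bset x).Infinite)
    (hA : bset x ∩ Ioi b ⊆ A) : x ∈ ellentuck (trunc x b) A := by
  refine ⟨hx, by rw [coe_trunc]; exact inter_subset_left, fun i hi => ?_⟩
  rw [coe_trunc]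
  rcases le_or_gt i b with h | h
  exacts [Or.inl ⟨hi, h⟩, Or.inr (hA ⟨hi, h⟩)]

lemma isOpen_setOf_trunc (P : Finset ℕ → Prop) (b : ℕ) :
    IsOpen {x : ℕ → Bool | P (trunc x b)} :=
  isOpen_iff_forall_mem_open.2 fun x hx =>
    ⟨PiNat.cylinder x (b + 1), fun y hy => by rwa [mem_ofPred_eq, trunc_eq_of_mem_cylinder hy],
      PiNat.isOpen_cylinder _ x _, PiNat.self_mem_cylinder x _⟩

lemma exists_cylinder_subset {x : ℕ → Bool} (hU : IsOpen U) (hx : x ∈ U) :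
    ∃ n, PiNat.cylinder x n ⊆ U := by
  obtain ⟨_, ⟨y, n, rfl⟩, hxy, hsub⟩ :=
    (PiNat.isTopologicalBasis_cylinders fun _ => Bool).exists_subset_of_mem_open hx hU
  exact ⟨n, PiNat.mem_cylinder_iff_eq.mp hxy ▸ hsub⟩

def Homogeneous (U : Set (ℕ → Bool)) (s : Finset ℕ) (A : Set ℕ) : Prop :=
  ellentuck s A ⊆ U ∨ Disjoint (ellentuck s A) U

lemma homogeneous_anti (U : Set (ℕ → Bool)) (s : Finset ℕ) : Antitone (Homogeneous U s) :=
  fun _ _ h hA => hA.imp (ellentuck_mono s h).trans (Disjoint.mono_left (ellentuck_mono s h))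

def IsCompletelyRamsey (U : Set (ℕ → Bool)) : Prop := ∀ s, IsDense (Homogeneous U s)

lemma le_of_sup_lt {s : Finset ℕ} {b i : ℕ} (hb : s.sup id < b) (hi : i ∈ s) : i ≤ b :=
  (Finset.le_sup (f := id) hi).trans hb.le

/-- Galvin–Prikry: once every stem is rejected, no point of an open set can lie in `[s, D]`. -/
lemma IsCompletelyRamsey.of_isOpen (hU : IsOpen U) : IsCompletelyRamsey U := by
  intro s A hA
  obtain ⟨B, hBA, hB, hdec⟩ := isDense_decides U s _ (hA.inter_Ioi (s.sup id))
  rcases hdec with hacc | hrej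
  · exact ⟨B, hBA.trans inter_subset_left, hB, Or.inl hacc⟩
  obtain ⟨D, hDB, hD, hDrej⟩ := exists_forall_rejects hB hrej
  refine ⟨D, hDB.trans (hBA.trans inter_subset_left), hD,
    Or.inr (disjoint_left.2 fun x hx hxU => ?_)⟩
  obtain ⟨n, hn⟩ := exists_cylinder_subset hU hxU
  obtain ⟨b, hbD, hnb⟩ := hD.exists_gt n
  have hsb : ∀ i ∈ s, i ≤ b := fun i => le_of_sup_lt (hBA (hDB hbD)).2
  refine hDrej b hbD (trunc x b) (fun i hi => ?_) ?_ _ subset_rfl (hD.inter_Ioi b) fun y hy => ?_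
  · rw [← Finset.mem_coe, coe_trunc]
    exact ⟨hx.2.1 hi, hsb i hi⟩
  · rw [coe_trunc]
    rintro i ⟨hix, hib⟩
    exact (hx.2.2 hix).imp id fun h => ⟨h, hib⟩
  · exact hn (PiNat.cylinder_anti x (by omega)
      (mem_cylinder_of_mem_ellentuck_trunc inter_subset_right hy))

lemma IsCompletelyRamsey.compl (h : IsCompletelyRamsey U) : IsCompletelyRamsey Uᶜ :=
  fun s A hA => (h s A hA).imp fun _ ⟨hBA, hB, hhom⟩ =>
    ⟨hBA, hB, hhom.symm.imp subset_compl_iff_disjoint_right.2 disjoint_compl_right_iff_subset.2⟩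

lemma isCompletelyRamsey_empty : IsCompletelyRamsey ∅ :=
  fun _ A hA => ⟨A, subset_rfl, hA, Or.inr (disjoint_empty _)⟩

lemma IsCompletelyRamsey.iUnion {V : ℕ → Set (ℕ → Bool)}
    (hV : ∀ m, IsCompletelyRamsey (V m)) : IsCompletelyRamsey (⋃ m, V m) := by
  classical
  intro s A hA
  obtain ⟨D, hDA, hD, hhom⟩ := isDense_diagonal
    (Q := fun b B => ∀ p ∈ (Finset.range (b + 1)).powerset ×ˢ Finset.range (b + 1),
      Homogeneous (V p.2) p.1 B)
    (fun b _ _ h hB p hp => homogeneous_anti _ _ h (hB p hp))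
    (fun b => isDense_forall_mem_finset _ (fun p => homogeneous_anti _ _)
      fun p _ => hV p.2 p.1)
    _ (hA.inter_Ioi (s.sup id))
  have hmem : ∀ {E}, E ⊆ D → ∀ x ∈ ellentuck s E, ∀ b ∈ D,
      x ∈ ellentuck (trunc x b) (D ∩ Ioi b) :=
    fun hED x hx b hb => mem_ellentuck_trunc hx.1 fun i ⟨hix, hib⟩ =>
      ⟨(hx.2.2 hix).elim (fun his => absurd (le_of_sup_lt (hDA hb).2 his) (not_le.2 hib))
        (fun h => hED h), hib⟩
  -- `D` is homogeneous for every `V m` with `m ≤ b` at every stem below `b`, so homogeneity of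
  -- `E ⊆ D` for this open set transfers to `⋃ m, V m`.
  set W := ⋃ b ∈ D, ⋃ m, {x | Accepts (V m) (trunc x b) (D ∩ Ioi b)}
  have hW : IsOpen W := isOpen_biUnion fun b _ => isOpen_iUnion fun m =>
    isOpen_setOf_trunc (fun t => Accepts (V m) t (D ∩ Ioi b)) b
  obtain ⟨E, hED, hE, hEhom⟩ := IsCompletelyRamsey.of_isOpen hW s D hD
  refine ⟨E, hED.trans (hDA.trans inter_subset_left), hE,
    hEhom.imp (fun hsub x hx => ?_) fun hdisj => ?_⟩
  · obtain ⟨b, hb, m, hacc⟩ : ∃ b ∈ D, ∃ m, Accepts (V m) (trunc x b) (D ∩ Ioi b) := by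
      simpa [W] using hsub hx
    exact mem_iUnion.2 ⟨m, hacc (hmem hED x hx b hb)⟩
  · refine disjoint_left.2 fun x hx hxV => ?_
    obtain ⟨m, hm⟩ := mem_iUnion.1 hxV
    obtain ⟨b, hbE, hmb⟩ := hE.exists_gt m
    have hxt := hmem hED x hx b (hED hbE)
    have hacc : Accepts (V m) (trunc x b) (D ∩ Ioi b) := by
      refine (hhom b (hED hbE) (trunc x b, m) ?_).resolve_right fun h => disjoint_left.1 h hxt hm
      simp only [Finset.mem_product, Finset.mem_powerset, Finset.mem_range]
      exact ⟨Finset.filter_subset _ _, by omega⟩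
    exact disjoint_left.1 hdisj hx (mem_biUnion (hED hbE) (mem_iUnion.2 ⟨m, hacc⟩))

lemma IsCompletelyRamsey.of_measurableSet (hU : MeasurableSet U) : IsCompletelyRamsey U := by
  rw [BorelSpace.measurable_eq (α := ℕ → Bool)] at hU
  induction U, hU using MeasurableSpace.generateFrom_induction with
  | hC U hU => exact .of_isOpen hU
  | empty => exact isCompletelyRamsey_empty
  | compl U _ hU => exact hU.compl
  | iUnion V _ hV => exact .iUnion hV

def patch (N : ℕ) (t : Finset ℕ) (z : ℕ → Bool) : ℕ → Bool :=
  fun n => if n < N then decide (n ∈ t) else z n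

lemma patch_of_le {N n : ℕ} (t : Finset ℕ) (z : ℕ → Bool) (h : N ≤ n) :
    patch N t z n = z n :=
  if_neg (not_lt.2 h)

lemma continuous_patch (N : ℕ) (t : Finset ℕ) : Continuous (patch N t) :=
  continuous_pi fun n => by
    unfold patch
    split_ifs
    exacts [continuous_const, continuous_apply n]

lemma exists_patch_eq {x z : ℕ → Bool} (h : {n | x n ≠ z n}.Finite) :
    ∃ N t, patch N t z = x := by
  obtain ⟨N, hN⟩ := h.bddAbove
  refine ⟨N + 1, trunc x N, funext fun n => ?_⟩
  by_cases hn : n < N + 1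
  · simp [patch, hn, trunc]
  · rw [patch_of_le _ _ (not_lt.1 hn)]
    exact not_not.1 fun hne => hn (Nat.lt_succ_of_le (hN (Ne.symm hne)))

lemma exists_almostSubset_homogeneous (hU : MeasurableSet U) {A : Set ℕ} (hA : A.Infinite) :
    ∃ y, (bset y).Infinite ∧ (bset y \ A).Finite ∧
      (y ∉ U ∨ ∀ x, (bset x).Infinite → (bset x \ bset y).Finite → x ∈ U) := by
  classical
  -- the points all of whose finite modifications lie in `U`
  set C := {z | ∀ N t, patch N t z ∈ U}
  have hC : MeasurableSet C := by
    simp only [C, ofPred_forall]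
    exact .iInter fun N => .iInter fun t => (continuous_patch N t).measurable hU
  obtain ⟨B, hBA, hB, hhom⟩ := IsCompletelyRamsey.of_measurableSet hC ∅ A hA
  set χ : ℕ → Bool := fun n => decide (n ∈ B)
  have hχ : bset χ = B := by ext; simp [bset, χ]
  rcases hhom with hsub | hdisj
  · refine ⟨χ, hχ ▸ hB, by simp [hχ, sdiff_eq_empty.2 hBA], Or.inr fun x hx hxB => ?_⟩
    rw [hχ] at hxB
    set z : ℕ → Bool := fun n => x n && χ n
    have hz : bset z = bset x ∩ B := by ext; simp [bset, z, χ]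
    have hzC : z ∈ C := hsub ⟨hz ▸ (hx.sdiff hxB).mono fun n hn =>
      ⟨hn.1, not_not.1 fun h => hn.2 ⟨hn.1, h⟩⟩, by simp, by simp [hz]⟩
    obtain ⟨N, t, hNt⟩ := exists_patch_eq (x := x) (z := z) (hxB.subset fun n hn => by
      simp only [z, χ, mem_ofPred_eq] at hn
      cases hxn : x n <;> by_cases hnB : n ∈ B <;> simp_all [bset])
    exact hNt ▸ hzC N t
  · obtain ⟨N, t, hNt⟩ : ∃ N t, patch N t χ ∉ U := by
      have : χ ∉ C := disjoint_left.1 hdisj ⟨hχ ▸ hB, by simp, by simp [hχ]⟩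
      simpa [C] using this
    have hB' : ∀ n, N ≤ n → (n ∈ bset (patch N t χ) ↔ n ∈ B) := fun n hn => by
      simp [bset, patch_of_le t χ hn, χ]
    refine ⟨patch N t χ,
      (hB.sdiff (finite_Iio N)).mono fun n hn => (hB' n (not_lt.1 hn.2)).2 hn.1,
      (finite_Iio N).subset fun n hn => not_le.1 fun hNn => hn.2 (hBA ((hB' n hNn).1 hn.1)),
      Or.inl hNt⟩

lemma finite_sdiff_trans {α : Type*} {a b c : Set α} (hab : (a \ b).Finite)
    (hbc : (b \ c).Finite) : (a \ c).Finite :=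
  (hab.union hbc).subset fun x hx => by
    by_cases hb : x ∈ b
    exacts [Or.inr ⟨hb, hx.2⟩, Or.inl ⟨hx.1, hb⟩]

lemma exists_subset_infinite_sdiff_infinite {α : Type*} {A : Set α} (hA : A.Infinite) :
    ∃ A' ⊆ A, A'.Infinite ∧ (A \ A').Infinite := by
  set f : ℕ → α := fun n => hA.natEmbedding A n
  have hf : Function.Injective f := Subtype.val_injective.comp (hA.natEmbedding A).injective
  have hfA : ∀ n, f n ∈ A := fun n => (hA.natEmbedding A n).2
  refine ⟨range fun n => f (2 * n), range_subset_iff.2 fun n => hfA _,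
    infinite_range_of_injective fun m n h => by have := hf h; omega,
    (infinite_range_of_injective (f := fun n => f (2 * n + 1)) fun m n h => by
      have := hf h; omega).mono ?_⟩
  rintro _ ⟨n, rfl⟩
  refine ⟨hfA _, ?_⟩
  rintro ⟨m, hm⟩
  have := hf hm
  omega

section Tower

variable {ι : Type*} {A : ι → Set ℕ}

lemma exists_finite_sdiff_biInter [Nonempty ι]
    (hcomp : ∀ i j, (A i \ A j).Finite ∨ (A j \ A i).Finite) (T : Finset ι) :
    ∃ i, (A i \ ⋂ j ∈ T, A j).Finite := by
  classical
  induction T using Finset.induction_on with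
  | empty => exact ⟨Classical.arbitrary ι, by simp⟩
  | insert k T _ ih =>
    obtain ⟨i, hi⟩ := ih
    simp only [Finset.set_biInter_insert, sdiff_inter]
    rcases hcomp i k with hik | hki
    · exact ⟨i, hik.union hi⟩
    · exact ⟨k, by simpa using finite_sdiff_trans hki hi⟩

lemma exists_pseudoIntersection [Countable ι] (hA : ∀ i, (A i).Infinite)
    (hcomp : ∀ i j, (A i \ A j).Finite ∨ (A j \ A i).Finite) :
    ∃ S : Set ℕ, S.Infinite ∧ ∀ i, (S \ A i).Finite := by
  classical
  cases isEmpty_or_nonempty ι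
  · exact ⟨univ, infinite_univ, fun i => isEmptyElim i⟩
  obtain ⟨e, he⟩ := exists_surjective_nat ι
  have hinf : ∀ n, (⋂ j ∈ (Finset.range (n + 1)).image e, A j).Infinite := fun n => by
    obtain ⟨i, hi⟩ := exists_finite_sdiff_biInter hcomp ((Finset.range (n + 1)).image e)
    exact ((hA i).sdiff hi).mono fun y hy => not_not.1 fun h => hy.2 ⟨hy.1, h⟩
  choose x hx hnx using fun n => (hinf n).exists_gt n
  refine ⟨range x, infinite_of_not_bddAbove ?_, fun i => ?_⟩
  · rintro ⟨M, hM⟩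
    exact (hnx M).not_ge (hM (mem_range_self M))
  · obtain ⟨m, rfl⟩ := he i
    refine ((finite_Iio m).image x).subset ?_
    rintro _ ⟨⟨k, rfl⟩, hk⟩
    refine ⟨k, mem_Iio.2 (not_le.1 fun hmk => hk ?_), rfl⟩
    exact mem_iInter₂.1 (hx k) (e m) (Finset.mem_image_of_mem e (Finset.mem_range.2 (by omega)))

def IsNextTerm (A : ι → Set ℕ) (U : Set (ℕ → Bool)) (y : ℕ → Bool) : Prop :=
  (bset y).Infinite ∧ (∀ i, (bset y \ A i).Finite ∧ (A i \ bset y).Infinite) ∧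
    (y ∉ U ∨ ∀ x, (bset x).Infinite → (bset x \ bset y).Finite → x ∈ U)

lemma exists_isNextTerm [Countable ι] (hA : ∀ i, (A i).Infinite)
    (hcomp : ∀ i j, (A i \ A j).Finite ∨ (A j \ A i).Finite) (hU : MeasurableSet U) :
    ∃ y, IsNextTerm A U y := by
  obtain ⟨S, hS, hSA⟩ := exists_pseudoIntersection hA hcomp
  obtain ⟨S', hS'S, hS', hSS'⟩ := exists_subset_infinite_sdiff_infinite hS
  obtain ⟨y, hy, hyS', hyU⟩ := exists_almostSubset_homogeneous hU hS'
  have hS'S : (S' \ S).Finite := by simp [sdiff_eq_empty.2 hS'S]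
  refine ⟨y, hy, fun i => ⟨finite_sdiff_trans hyS' (finite_sdiff_trans hS'S (hSA i)), ?_⟩,
    hyU⟩
  refine (((hSS'.sdiff (hSA i)).sdiff hyS').mono ?_)
  rintro n ⟨⟨⟨hnS, hnS'⟩, hnA⟩, hny⟩
  exact ⟨not_not.1 fun h => hnA ⟨hnS, h⟩, fun h => hny ⟨h, hnS'⟩⟩

end Tower

lemma countable_Iio_of_lt_omega_one {α : Ordinal.{0}} (h : α < (Cardinal.aleph 1).ord) :
    Countable (Iio α) := by
  rw [← Cardinal.mk_le_aleph0_iff, Cardinal.mk_Iio_ordinal, Cardinal.lift_le_aleph0,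
    ← Cardinal.lt_aleph_one_iff]
  exact Cardinal.lt_ord.mp h

noncomputable def tower (B : Ordinal.{0} → Set (ℕ → Bool)) : Ordinal.{0} → ℕ → Bool :=
  Ordinal.lt_wf.fix fun α prev =>
    Classical.epsilon (IsNextTerm (fun β : Iio α => bset (prev β β.2)) (B α))

lemma tower_isNextTerm {B : Ordinal.{0} → Set (ℕ → Bool)}
    (hB : ∀ α < (Cardinal.aleph 1).ord, MeasurableSet (B α)) {α : Ordinal.{0}}
    (hα : α < (Cardinal.aleph 1).ord) :
    IsNextTerm (fun β : Iio α => bset (tower B β)) (B α) (tower B α) := by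
  induction α using WellFoundedLT.induction with
  | _ α ih =>
  have hfix : tower B α =
      Classical.epsilon (IsNextTerm (fun β : Iio α => bset (tower B β)) (B α)) := by
    rw [tower, WellFounded.fix_eq]
  rw [hfix]
  have := countable_Iio_of_lt_omega_one hα
  refine Classical.epsilon_spec (exists_isNextTerm (A := fun β : Iio α => bset (tower B β))
    (fun β => (ih β.1 β.2 (β.2.trans hα)).1) ?_ (hB α hα))
  rintro ⟨β, hβ⟩ ⟨γ, hγ⟩
  rcases lt_trichotomy β γ with h | rfl | h
  · exact Or.inr ((ih γ hγ (hγ.trans hα)).2.1 ⟨β, h⟩).1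
  · simp
  · exact Or.inl ((ih β hβ (hβ.trans hα)).2.1 ⟨γ, h⟩).1

end GalvinPrikry

/-- For every `ω₁`-sequence of Borel subsets of `[ω]^ω` there is a `⊆*`-decreasing
(and strictly decreasing mod finite) `ω₁`-sequence of infinite subsets of `ℕ`
such that for each `α`, either `y_α ∉ B_α` or `[y_α]^{*ω} ⊆ B_α`. -/
theorem stmt12 (B : Ordinal.{0} → Set (ℕ → Bool))
    (hB : ∀ α < (Cardinal.aleph 1).ord,
      MeasurableSet[borel (ℕ → Bool)] (B α) ∧ ∀ x ∈ B α, (bset x).Infinite) :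
    ∃ y : Ordinal.{0} → (ℕ → Bool),
      (∀ α < (Cardinal.aleph 1).ord, (bset (y α)).Infinite) ∧
      (∀ α β : Ordinal.{0}, α < β → β < (Cardinal.aleph 1).ord →
        (bset (y β) \ bset (y α)).Finite ∧ (bset (y α) \ bset (y β)).Infinite) ∧
      (∀ α < (Cardinal.aleph 1).ord,
        y α ∉ B α ∨
        ∀ x : ℕ → Bool, (bset x).Infinite → (bset x \ bset (y α)).Finite → x ∈ B α) := by
  have hmeas : ∀ α < (Cardinal.aleph 1).ord, MeasurableSet (B α) := fun α hα => by
    rw [BorelSpace.measurable_eq (α := ℕ → Bool)]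
    exact (hB α hα).1
  have h := fun α (hα : α < (Cardinal.aleph 1).ord) => GalvinPrikry.tower_isNextTerm hmeas hα
  exact ⟨GalvinPrikry.tower B, fun α hα => (h α hα).1,
    fun α β hαβ hβ => (h β hβ).2.1 ⟨α, hαβ⟩, fun α hα => (h α hα).2.2⟩
end

section
/- Let M be a metrizable space, X ⊆ M, and let M(X) denote M with the topology generated by the open sets of M together with the singletons {x} for x ∈ X. If Y = M \ X is not a G_δ subset of M, then Y is a closed subset of M(X) that is not a G_δ subset of M(X); consequently M(X) is not metrizable. -/
open Topology

lemma michael_open_decomp {M : Type*} (t : TopologicalSpace M) (X : Set M) {W : Set M}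
    (h : IsOpen[michael t X] W) : ∃ U, IsOpen[t] U ∧ U ⊆ W ∧ W ⊆ U ∪ X := by
  induction h with
  | basic S hS =>
    rcases hS with hS | ⟨x, hx, rfl⟩
    · exact ⟨S, hS, subset_rfl, Set.subset_union_left⟩
    · exact ⟨∅, isOpen_empty, Set.empty_subset _,
        Set.union_comm X ∅ ▸ (Set.singleton_subset_iff.mpr hx).trans Set.subset_union_left⟩
  | univ => exact ⟨Set.univ, isOpen_univ, subset_rfl, Set.subset_union_left⟩
  | inter W₁ W₂ _ _ ih₁ ih₂ =>
    obtain ⟨U₁, hU₁, hU₁W, hWU₁⟩ := ih₁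
    obtain ⟨U₂, hU₂, hU₂W, hWU₂⟩ := ih₂
    refine ⟨U₁ ∩ U₂, hU₁.inter hU₂, Set.inter_subset_inter hU₁W hU₂W, ?_⟩
    rintro a ⟨ha₁, ha₂⟩
    rcases hWU₁ ha₁ with h1 | hX
    · rcases hWU₂ ha₂ with h2 | hX
      · exact Or.inl ⟨h1, h2⟩
      · exact Or.inr hX
    · exact Or.inr hX
  | sUnion S _ ih =>
    choose U hU hUW hWU using ih
    refine ⟨⋃ (W : Set M) (h : W ∈ S), U W h, isOpen_iUnion fun W => isOpen_iUnion (hU W),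
      ?_, ?_⟩
    · exact Set.iUnion_subset fun W => Set.iUnion_subset fun h =>
        (hUW W h).trans (Set.subset_sUnion_of_mem h)
    · rintro a ⟨W, hWS, haW⟩
      rcases hWU W hWS haW with h | h
      · exact Or.inl (Set.mem_iUnion.mpr ⟨W, Set.mem_iUnion.mpr ⟨hWS, h⟩⟩)
      · exact Or.inr h

/-- If `M` is metrizable and `Y = M \ X` is not `G_δ` in `M`, then `Y` is closed in
`M(X)` but not `G_δ` in `M(X)`; consequently `M(X)` is not metrizable. -/
theorem stmt15 {M : Type*} [t : TopologicalSpace M] [TopologicalSpace.MetrizableSpace M]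
    (X Y : Set M) (hYdef : Y = Set.univ \ X) (hY : ¬ IsGδ Y) :
    IsClosed[michael t X] Y ∧ ¬ @IsGδ M (michael t X) Y ∧
    ¬ @TopologicalSpace.MetrizableSpace M (michael t X) := by
  have hXopen : IsOpen[michael t X] X := by
    have hX : X = ⋃₀ {S : Set M | ∃ x ∈ X, S = {x}} := by
      ext a
      simp only [Set.mem_sUnion, Set.mem_setOf_eq]
      constructor
      · exact fun ha => ⟨{a}, ⟨a, ha, rfl⟩, rfl⟩
      · rintro ⟨_, ⟨x, hx, rfl⟩, rfl⟩; exact hx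
    have h2 : IsOpen[michael t X] (⋃₀ {S : Set M | ∃ x ∈ X, S = {x}}) :=
      TopologicalSpace.GenerateOpen.sUnion _ fun S hS =>
        TopologicalSpace.GenerateOpen.basic _ (Or.inr hS)
    rwa [← hX] at h2
  have hYcomp : Yᶜ = X := by
    rw [hYdef, Set.compl_eq_univ_diff, Set.diff_diff_cancel_left (Set.subset_univ X)]
  have hYclosed : IsClosed[michael t X] Y := by
    have h3 : IsOpen[michael t X] Yᶜ := by rw [hYcomp]; exact hXopen
    exact @IsClosed.mk M (michael t X) Y h3
  have hYnotGδ : ¬ @IsGδ M (michael t X) Y := by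
    intro hGδ
    apply hY
    obtain ⟨T, hTopen, hTcount, rfl⟩ := hGδ
    choose U hU hUW hWU using fun W (hW : W ∈ T) => michael_open_decomp t X (hTopen W hW)
    have key : ⋂₀ T = ⋂₀ ((fun W : {W // W ∈ T} => U W W.2) '' Set.univ) := by
      apply Set.Subset.antisymm
      · rintro a ha _ ⟨⟨W, hW⟩, -, rfl⟩
        rcases hWU W hW (ha W hW) with h | h
        · exact h
        · exact absurd h (by have := hYdef ▸ ha; exact this.2)
      · intro a ha W hW
        exact hUW W hW (ha _ ⟨⟨W, hW⟩, Set.mem_univ _, rfl⟩)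
    rw [key]
    refine ⟨_, ?_, ?_, rfl⟩
    · rintro _ ⟨⟨W, hW⟩, -, rfl⟩; exact hU W hW
    · haveI := hTcount.to_subtype
      exact Set.countable_univ.image _
  refine ⟨hYclosed, hYnotGδ, fun hmet => hYnotGδ ?_⟩
  clear hY hYnotGδ hYcomp hXopen
  letI : TopologicalSpace M := michael t X
  haveI : TopologicalSpace.MetrizableSpace M := hmet
  letI := TopologicalSpace.metrizableSpaceMetric M
  exact hYclosed.isGδ
end
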